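/- arXiv:2204.04597 — 10 statements merged into one kernel-verified Lean document; each statement's English description precedes it below -/
import Mathlib

section
/- Let P₁, Q₁ be probability measures on a measurable space R₁ and P₂, Q₂ probability measures on a measurable space R₂, and let α > 1. If D_α(P₁‖Q₁) ≤ ε₁ and D_α(P₂‖Q₂) ≤ ε₂, then the product measures satisfy D_α(P₁ ⊗ P₂ ‖ Q₁ ⊗ Q₂) ≤ ε₁ + ε₂. (Basic Rényi-differential-privacy composition: if M₁ is (α,ε₁)-RDP and M₂ is (α,ε₂)-RDP, the mechanism (M₁, M₂) with independent randomness is (α, ε₁+ε₂)-RDP.) -/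
/-!
The density of `P₁ ⊗ P₂` with respect to `Q₁ ⊗ Q₂` is `(x, y) ↦ dP₁/dQ₁ x · dP₂/dQ₂ y`, so by
Fubini the moment `∫ (dP/dQ)^α dQ` of the product is the product of the two moments, and the
logarithm turns it into a sum. The only care needed is that each moment has nonnegative
logarithm: by Jensen it is at least `1` when the integrand is integrable, and it is the junk
value `0` otherwise, where `log 0 = 0`.
-/

open MeasureTheory Real
open scoped Classical

/-- The Rényi divergence of order `α` between two measures:
`D_α(P‖Q) = (α−1)⁻¹ · log ∫ (dP/dQ)^α dQ` when `P ≪ Q`, and `⊤` otherwise. -/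
noncomputable def renyiDiv {Ω : Type*} [MeasurableSpace Ω] (α : ℝ) (P Q : Measure Ω) : EReal :=
  if P ≪ Q then
    (((α - 1)⁻¹ * Real.log (∫ x, (P.rnDeriv Q x).toReal ^ α ∂Q) : ℝ) : EReal)
  else ⊤

lemma Real.log_mul_le_add {a b : ℝ} (ha : 0 ≤ Real.log a) (hb : 0 ≤ Real.log b) :
    Real.log (a * b) ≤ Real.log a + Real.log b := by
  rcases eq_or_ne a 0 with rfl | ha₀
  · simpa using hb
  rcases eq_or_ne b 0 with rfl | hb₀
  · simpa using ha
  exact (Real.log_mul ha₀ hb₀).le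

namespace MeasureTheory.Measure

variable {Ω₁ Ω₂ : Type*} [MeasurableSpace Ω₁] [MeasurableSpace Ω₂]

lemma rnDeriv_prod {μ₁ ν₁ : Measure Ω₁} {μ₂ ν₂ : Measure Ω₂}
    [SigmaFinite μ₁] [SigmaFinite ν₁] [SigmaFinite μ₂] [SigmaFinite ν₂]
    (h₁ : μ₁ ≪ ν₁) (h₂ : μ₂ ≪ ν₂) :
    (μ₁.prod μ₂).rnDeriv (ν₁.prod ν₂) =ᵐ[ν₁.prod ν₂]
      fun z ↦ μ₁.rnDeriv ν₁ z.1 * μ₂.rnDeriv ν₂ z.2 := by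
  have hdensity : μ₁.prod μ₂ =
      (ν₁.prod ν₂).withDensity fun z ↦ μ₁.rnDeriv ν₁ z.1 * μ₂.rnDeriv ν₂ z.2 := by
    rw [← prod_withDensity (measurable_rnDeriv _ _) (measurable_rnDeriv _ _),
      withDensity_rnDeriv_eq _ _ h₁, withDensity_rnDeriv_eq _ _ h₂]
  rw [hdensity]
  exact rnDeriv_withDensity _ (by fun_prop)

lemma integral_rpow_rnDeriv_prod {μ₁ ν₁ : Measure Ω₁} {μ₂ ν₂ : Measure Ω₂}
    [SigmaFinite μ₁] [SigmaFinite ν₁] [SigmaFinite μ₂] [SigmaFinite ν₂]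
    (h₁ : μ₁ ≪ ν₁) (h₂ : μ₂ ≪ ν₂) (α : ℝ) :
    ∫ z, ((μ₁.prod μ₂).rnDeriv (ν₁.prod ν₂) z).toReal ^ α ∂(ν₁.prod ν₂) =
      (∫ x, (μ₁.rnDeriv ν₁ x).toReal ^ α ∂ν₁) * ∫ y, (μ₂.rnDeriv ν₂ y).toReal ^ α ∂ν₂ := by
  rw [← integral_prod_mul]
  refine integral_congr_ae ((rnDeriv_prod h₁ h₂).mono fun z hz ↦ ?_)
  simp only [hz, ENNReal.toReal_mul, Real.mul_rpow ENNReal.toReal_nonneg ENNReal.toReal_nonneg]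

end MeasureTheory.Measure

section Moment

variable {Ω : Type*} [MeasurableSpace Ω] {P Q : Measure Ω}
  [IsProbabilityMeasure P] [IsProbabilityMeasure Q] {α : ℝ}

lemma one_le_integral_rpow_rnDeriv (hPQ : P ≪ Q) (hα : 1 ≤ α)
    (hint : Integrable (fun x ↦ (P.rnDeriv Q x).toReal ^ α) Q) :
    1 ≤ ∫ x, (P.rnDeriv Q x).toReal ^ α ∂Q := by
  have h := le_integral_rnDeriv_of_ac (convexOn_rpow hα)
    (Real.continuous_rpow_const (by linarith)).continuousWithinAt hint hPQ
  simpa using h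

lemma log_integral_rpow_rnDeriv_nonneg (hPQ : P ≪ Q) (hα : 1 ≤ α) :
    0 ≤ Real.log (∫ x, (P.rnDeriv Q x).toReal ^ α ∂Q) := by
  by_cases hint : Integrable (fun x ↦ (P.rnDeriv Q x).toReal ^ α) Q
  · exact Real.log_nonneg (one_le_integral_rpow_rnDeriv hPQ hα hint)
  · simp [integral_undef hint]

end Moment

lemma renyiDiv_le_coe_iff {Ω : Type*} [MeasurableSpace Ω] {α ε : ℝ} {P Q : Measure Ω} :
    renyiDiv α P Q ≤ (ε : EReal) ↔
      P ≪ Q ∧ (α - 1)⁻¹ * Real.log (∫ x, (P.rnDeriv Q x).toReal ^ α ∂Q) ≤ ε := by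
  unfold renyiDiv
  split_ifs with hPQ
  · simp only [hPQ, true_and, EReal.coe_le_coe_iff]
  · simp [hPQ]

/-- basic RDP composition: if `D_α(P₁‖Q₁) ≤ ε₁` and `D_α(P₂‖Q₂) ≤ ε₂`
for `α > 1`, then `D_α(P₁ ⊗ P₂ ‖ Q₁ ⊗ Q₂) ≤ ε₁ + ε₂`. -/
theorem renyiDiv_prod_le {Ω₁ Ω₂ : Type*} [MeasurableSpace Ω₁] [MeasurableSpace Ω₂]
    (P₁ Q₁ : Measure Ω₁) (P₂ Q₂ : Measure Ω₂)
    [IsProbabilityMeasure P₁] [IsProbabilityMeasure Q₁]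
    [IsProbabilityMeasure P₂] [IsProbabilityMeasure Q₂]
    (α ε₁ ε₂ : ℝ) (hα : 1 < α)
    (h₁ : renyiDiv α P₁ Q₁ ≤ (ε₁ : EReal))
    (h₂ : renyiDiv α P₂ Q₂ ≤ (ε₂ : EReal)) :
    renyiDiv α (P₁.prod P₂) (Q₁.prod Q₂) ≤ ((ε₁ + ε₂ : ℝ) : EReal) := by
  obtain ⟨hPQ₁, hε₁⟩ := renyiDiv_le_coe_iff.1 h₁
  obtain ⟨hPQ₂, hε₂⟩ := renyiDiv_le_coe_iff.1 h₂
  refine renyiDiv_le_coe_iff.2 ⟨hPQ₁.prod hPQ₂, ?_⟩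
  rw [Measure.integral_rpow_rnDeriv_prod hPQ₁ hPQ₂]
  have hlog₁ := log_integral_rpow_rnDeriv_nonneg hPQ₁ hα.le
  have hlog₂ := log_integral_rpow_rnDeriv_nonneg hPQ₂ hα.le
  have hcoef : 0 ≤ (α - 1)⁻¹ := inv_nonneg.2 (sub_nonneg.2 hα.le)
  calc _ ≤ (α - 1)⁻¹ * (Real.log _ + Real.log _) :=
        mul_le_mul_of_nonneg_left (Real.log_mul_le_add hlog₁ hlog₂) hcoef
    _ ≤ ε₁ + ε₂ := by
        rw [mul_add]
        exact add_le_add hε₁ hε₂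
end

section
/- Privacy of the Gaussian mechanism: let Δ > 0, let 0 < ε < 1 and 0 < δ < 1, and set σ = √(2 log(1.25/δ)) · Δ/ε. Then for all real numbers μ, μ' with |μ − μ'| ≤ Δ and every measurable set S ⊆ ℝ, the Gaussian measures satisfy N(μ, σ²)(S) ≤ e^ε · N(μ', σ²)(S) + δ. (Equivalently, the mechanism that outputs q(X) + N(0, σ²) for a real-valued query q of sensitivity Δ is (ε, δ)-differentially private.) -/
/-!
The density of `N(μ, σ²)` is `exp L(x)` times that of `N(μ', σ²)`, where the privacy loss
`L(x) = (μ - μ') (2x - μ - μ') / (2σ²)` is affine in `x`; so off `{L > ε}` the first measure is at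
most `e^ε` times the second. Writing `x = μ + c z` with `z` standard normal and `|c| = σ`, the event
`{L > ε}` lies inside `{z > t}` for `t = σε/Δ - Δ/(2σ) = s - ε/(2s)`, `s = √(2 log (1.25/δ))`.
Comparing the density with its translate by `t` bounds this tail by `e^{-t²/2}/2 ≤ δ` when `t ≥ 0`
(as `t² ≥ s² - ε`); when `t < 0` the tail is at most `1/2 + |t|/√(2π)`, while `δ ≥ 15/16`.
-/

open MeasureTheory Real ProbabilityTheory Set
open scoped NNReal

namespace ProbabilityTheory

noncomputable def gaussianPrivacyLoss (μ μ' : ℝ) (v : ℝ≥0) (x : ℝ) : ℝ :=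
  (μ - μ') * (2 * x - μ - μ') / (2 * v)

lemma measurable_gaussianPrivacyLoss (μ μ' : ℝ) (v : ℝ≥0) :
    Measurable (gaussianPrivacyLoss μ μ' v) := by
  unfold gaussianPrivacyLoss
  fun_prop

lemma gaussianPDFReal_eq_exp_privacyLoss_mul {v : ℝ≥0} (hv : v ≠ 0) (μ μ' x : ℝ) :
    gaussianPDFReal μ v x =
      rexp (gaussianPrivacyLoss μ μ' v x) * gaussianPDFReal μ' v x := by
  have hv' : (v : ℝ) ≠ 0 := NNReal.coe_ne_zero.mpr hv
  rw [gaussianPDFReal, gaussianPDFReal, mul_left_comm, ← Real.exp_add, gaussianPrivacyLoss]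
  congr 2
  field_simp
  ring

lemma gaussianReal_apply_le_exp_mul {v : ℝ≥0} (hv : v ≠ 0) {μ μ' ε : ℝ} {s : Set ℝ}
    (hs : MeasurableSet s) (hloss : ∀ x ∈ s, gaussianPrivacyLoss μ μ' v x ≤ ε) :
    gaussianReal μ v s ≤ ENNReal.ofReal (rexp ε) * gaussianReal μ' v s := by
  rw [gaussianReal_apply μ hv, gaussianReal_apply μ' hv,
    ← lintegral_const_mul' _ _ ENNReal.ofReal_ne_top]
  refine setLIntegral_mono' hs fun x hx => ?_
  rw [gaussianPDF, gaussianPDF, ← ENNReal.ofReal_mul (exp_nonneg ε),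
    gaussianPDFReal_eq_exp_privacyLoss_mul hv μ μ' x]
  gcongr
  · exact gaussianPDFReal_nonneg μ' v x
  · exact hloss x hx

lemma gaussianPDFReal_le (μ : ℝ) (v : ℝ≥0) (x : ℝ) :
    gaussianPDFReal μ v x ≤ (√(2 * π * v))⁻¹ := by
  rw [gaussianPDFReal]
  refine mul_le_of_le_one_right (by positivity) (exp_le_one_iff.mpr ?_)
  exact div_nonpos_of_nonpos_of_nonneg (neg_nonpos.mpr (sq_nonneg _)) (by positivity)

lemma gaussianReal_Ioi_self (μ : ℝ) {v : ℝ≥0} (hv : v ≠ 0) : gaussianReal μ v (Ioi μ) = 2⁻¹ := by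
  have : NullSingletonClass (gaussianReal μ v) := nullSingletonClass_gaussianReal hv
  have hsymm : gaussianReal μ v (Iio μ) = gaussianReal μ v (Ioi μ) := by
    conv_lhs => rw [← show 2 * μ - μ = μ by ring, ← gaussianReal_map_const_sub]
    rw [Measure.map_apply (by fun_prop) measurableSet_Iio]
    congr 1
    ext x
    simp only [mem_preimage, mem_Iio, mem_Ioi]
    constructor <;> intro h <;> linarith
  have hsum : gaussianReal μ v (Iio μ) + gaussianReal μ v (Ioi μ) = 1 := by
    rw [← measure_union Ioi_disjoint_Iio_same.symm measurableSet_Ioi, Iio_union_Ioi,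
      measure_compl (measurableSet_singleton μ) (measure_ne_top _ _), measure_singleton,
      measure_univ, tsub_zero]
  rw [hsymm, ← two_mul] at hsum
  exact ENNReal.eq_inv_of_mul_eq_one_left (by rwa [mul_comm] at hsum)

lemma gaussianReal_Ioi_le_of_nonneg {t : ℝ} (ht : 0 ≤ t) :
    gaussianReal 0 1 (Ioi t) ≤ ENNReal.ofReal (rexp (-t ^ 2 / 2) / 2) := by
  have hloss : ∀ x ∈ Ioi t, gaussianPrivacyLoss 0 t 1 x ≤ -t ^ 2 / 2 := fun x hx => by
    rw [gaussianPrivacyLoss, NNReal.coe_one]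
    nlinarith [mem_Ioi.mp hx]
  calc gaussianReal 0 1 (Ioi t)
      ≤ ENNReal.ofReal (rexp (-t ^ 2 / 2)) * gaussianReal t 1 (Ioi t) :=
        gaussianReal_apply_le_exp_mul one_ne_zero measurableSet_Ioi hloss
    _ = ENNReal.ofReal (rexp (-t ^ 2 / 2) / 2) := by
        rw [gaussianReal_Ioi_self t one_ne_zero, ENNReal.ofReal_div_of_pos two_pos,
          ENNReal.ofReal_ofNat]
        exact (div_eq_mul_inv _ _).symm

lemma gaussianReal_Ioi_le_of_nonpos {t : ℝ} (ht : t ≤ 0) :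
    gaussianReal 0 1 (Ioi t) ≤ ENNReal.ofReal (1 / 2 - t / √(2 * π)) := by
  have hIoc : gaussianReal 0 1 (Ioc t 0) ≤ ENNReal.ofReal (-t / √(2 * π)) := by
    calc gaussianReal 0 1 (Ioc t 0)
        = ∫⁻ x in Ioc t 0, gaussianPDF 0 1 x := gaussianReal_apply 0 one_ne_zero _
      _ ≤ ∫⁻ _ in Ioc t 0, ENNReal.ofReal (√(2 * π))⁻¹ :=
          setLIntegral_mono' measurableSet_Ioc fun x _ => by
            simpa [gaussianPDF] using ENNReal.ofReal_le_ofReal (gaussianPDFReal_le 0 1 x)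
      _ = ENNReal.ofReal (-t / √(2 * π)) := by
          rw [setLIntegral_const, Real.volume_Ioc, ← ENNReal.ofReal_mul (by positivity)]
          ring_nf
  calc gaussianReal 0 1 (Ioi t)
      = gaussianReal 0 1 (Ioc t 0 ∪ Ioi 0) := by rw [Ioc_union_Ioi_eq_Ioi ht]
    _ ≤ gaussianReal 0 1 (Ioc t 0) + gaussianReal 0 1 (Ioi 0) := measure_union_le _ _
    _ ≤ ENNReal.ofReal (-t / √(2 * π)) + ENNReal.ofReal (1 / 2) := by
        rw [gaussianReal_Ioi_self 0 one_ne_zero, one_div, ENNReal.ofReal_inv_of_pos two_pos,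
          ENNReal.ofReal_ofNat]
        gcongr
    _ = ENNReal.ofReal (1 / 2 - t / √(2 * π)) := by
        rw [← ENNReal.ofReal_add (div_nonneg (neg_nonneg.mpr ht) (sqrt_nonneg _)) (by norm_num)]
        ring_nf

lemma gaussianReal_privacyLoss_gt_le {μ μ' σ ε Δ : ℝ} {v : ℝ≥0} (hv : (v : ℝ) = σ ^ 2)
    (hσ : 0 < σ) (hε : 0 ≤ ε) (hΔ : 0 < Δ) (hμ : |μ - μ'| ≤ Δ) :
    gaussianReal μ v {x | ε < gaussianPrivacyLoss μ μ' v x}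
      ≤ gaussianReal 0 1 (Ioi (σ * ε / Δ - Δ / (2 * σ))) := by
  set a := μ - μ'
  set t := σ * ε / Δ - Δ / (2 * σ)
  -- the sign of `c` turns both signs of `μ - μ'` into the upper tail
  obtain ⟨c, hc2, hca⟩ : ∃ c : ℝ, c ^ 2 = σ ^ 2 ∧ c * a = σ * |a| := by
    rcases abs_choice a with h | h
    · exact ⟨σ, rfl, by rw [h]⟩
    · exact ⟨-σ, neg_sq σ, by rw [h]; ring⟩
  have hmap : (gaussianReal 0 1).map (fun z => c * z + μ) = gaussianReal μ v := by
    change Measure.map ((· + μ) ∘ (c * ·)) _ = _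
    rw [← Measure.map_map (by fun_prop) (by fun_prop),
      gaussianReal_map_const_mul, gaussianReal_map_add_const]
    congr 1
    · simp
    · ext; simp [hc2, hv]
  have hthreshold : t * (2 * σ * |a|) ≤ 2 * σ ^ 2 * ε - |a| ^ 2 := by
    have hratio : |a| / Δ ≤ 1 := div_le_one_of_le₀ hμ hΔ.le
    have hexpand : t * (2 * σ * |a|) = 2 * σ ^ 2 * ε * (|a| / Δ) - Δ * |a| := by
      simp only [t]; field_simp
    nlinarith [mul_nonneg (by positivity : 0 ≤ 2 * σ ^ 2 * ε) (sub_nonneg.mpr hratio), abs_nonneg a]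
  rw [← hmap, Measure.map_apply (by fun_prop)
    (measurableSet_lt measurable_const (measurable_gaussianPrivacyLoss _ _ _))]
  refine measure_mono fun z hz => ?_
  have hz : 2 * σ ^ 2 * ε < 2 * σ * |a| * z + |a| ^ 2 := by
    have hlinear : a * (2 * (c * z + μ) - μ - μ') = 2 * (c * a) * z + a ^ 2 := by ring
    rw [mem_preimage, mem_ofPred_eq, gaussianPrivacyLoss, hv, lt_div_iff₀ (by positivity),
      hlinear, hca, ← sq_abs a] at hz
    linarith
  exact lt_of_mul_lt_mul_left (by nlinarith : 2 * σ * |a| * t < 2 * σ * |a| * z) (by positivity)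

end ProbabilityTheory

lemma exp_neg_sq_sub_div_le {s ε : ℝ} (hs : 0 < s) (hε0 : 0 ≤ ε) (hε1 : ε ≤ 1) :
    rexp (-(s - ε / (2 * s)) ^ 2 / 2) / 2 ≤ 1.25 * rexp (-s ^ 2 / 2) := by
  have hsq : s ^ 2 - ε ≤ (s - ε / (2 * s)) ^ 2 := by
    have : (s - ε / (2 * s)) ^ 2 = s ^ 2 - ε + (ε / (2 * s)) ^ 2 := by field_simp; ring
    nlinarith [sq_nonneg (ε / (2 * s))]
  have hexp : rexp (ε / 2) ≤ 2 :=
    (exp_bound_div_one_sub_of_interval (by positivity) (by linarith)).trans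
      (by rw [div_le_iff₀ (by linarith)]; linarith)
  calc rexp (-(s - ε / (2 * s)) ^ 2 / 2) / 2
      ≤ rexp (ε / 2 + -s ^ 2 / 2) / 2 := by gcongr; linarith
    _ = rexp (ε / 2) * rexp (-s ^ 2 / 2) / 2 := by rw [exp_add]
    _ ≤ 1.25 * rexp (-s ^ 2 / 2) := by nlinarith [exp_pos (-s ^ 2 / 2)]

lemma half_sub_div_sqrt_two_pi_le {s ε : ℝ} (hs : 0 < s) (hε1 : ε < 1)
    (ht : s - ε / (2 * s) < 0) (hδ1 : 1.25 * rexp (-s ^ 2 / 2) < 1) :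
    1 / 2 - (s - ε / (2 * s)) / √(2 * π) ≤ 1.25 * rexp (-s ^ 2 / 2) := by
  have hs2 : s ^ 2 < 1 / 2 := by
    have : ε / (2 * s) * (2 * s) = ε := by field_simp
    nlinarith
  have hlow : 1 - s ^ 2 / 2 ≤ rexp (-s ^ 2 / 2) := by linarith [add_one_le_exp (-s ^ 2 / 2)]
  have hs_low : 5 / 8 ≤ s := by nlinarith
  have hgap : ε / (2 * s) ≤ 4 / 5 := by rw [div_le_iff₀ (by positivity)]; linarith
  have hsqrt : 5 / 2 ≤ √(2 * π) := Real.le_sqrt_of_sq_le (by nlinarith [pi_gt_d2])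
  have hquot : -(s - ε / (2 * s)) / √(2 * π) ≤ 8 / 25 := by
    rw [div_le_iff₀ (by positivity)]; nlinarith
  rw [sub_eq_add_neg, ← neg_div]
  linarith

lemma gaussianReal_Ioi_sqrt_log_le {ε δ : ℝ} (hε0 : 0 < ε) (hε1 : ε < 1) (hδ0 : 0 < δ)
    (hδ1 : δ < 1) :
    gaussianReal 0 1 (Ioi (√(2 * log (1.25 / δ)) - ε / (2 * √(2 * log (1.25 / δ)))))
      ≤ ENNReal.ofReal δ := by
  set s := √(2 * log (1.25 / δ))
  have hlog : 0 < log (1.25 / δ) := log_pos (by rw [lt_div_iff₀ hδ0]; linarith)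
  have hs : 0 < s := sqrt_pos.mpr (by positivity)
  have hδ : δ = 1.25 * rexp (-s ^ 2 / 2) := by
    rw [sq_sqrt (by positivity), show -(2 * log (1.25 / δ)) / 2 = -log (1.25 / δ) by ring,
      exp_neg, exp_log (by positivity)]
    field_simp
  rw [hδ] at hδ1 ⊢
  rcases le_or_gt 0 (s - ε / (2 * s)) with ht | ht
  · exact (gaussianReal_Ioi_le_of_nonneg ht).trans
      (ENNReal.ofReal_le_ofReal (exp_neg_sq_sub_div_le hs hε0.le hε1.le))
  · exact (gaussianReal_Ioi_le_of_nonpos ht.le).trans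
      (ENNReal.ofReal_le_ofReal (half_sub_div_sqrt_two_pi_le hs hε1 ht hδ1))

/-- privacy of the Gaussian mechanism: let `Δ > 0`, `0 < ε < 1`,
`0 < δ < 1`, and `σ = √(2 log (1.25/δ)) · Δ/ε`. Then for all `μ, μ'` with
`|μ − μ'| ≤ Δ` and every measurable `S ⊆ ℝ`,
`N(μ, σ²)(S) ≤ e^ε · N(μ', σ²)(S) + δ`. -/
theorem gaussian_mechanism_dp (Δ ε δ : ℝ) (hΔ : 0 < Δ) (hε0 : 0 < ε) (hε1 : ε < 1)
    (hδ0 : 0 < δ) (hδ1 : δ < 1)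
    (σ : ℝ) (hσ : σ = Real.sqrt (2 * Real.log (1.25 / δ)) * Δ / ε) :
    ∀ μ μ' : ℝ, |μ - μ'| ≤ Δ → ∀ S : Set ℝ, MeasurableSet S →
      gaussianReal μ (⟨σ ^ 2, sq_nonneg σ⟩ : NNReal) S ≤
        ENNReal.ofReal (Real.exp ε) * gaussianReal μ' (⟨σ ^ 2, sq_nonneg σ⟩ : NNReal) S +
          ENNReal.ofReal δ := by
  intro μ μ' hμ S hS
  have hs : 0 < √(2 * log (1.25 / δ)) :=
    sqrt_pos.mpr (mul_pos two_pos (log_pos (by rw [lt_div_iff₀ hδ0]; linarith)))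
  have hσ0 : 0 < σ := by rw [hσ]; positivity
  have hthreshold : σ * ε / Δ - Δ / (2 * σ)
      = √(2 * log (1.25 / δ)) - ε / (2 * √(2 * log (1.25 / δ))) := by
    rw [hσ]; field_simp
  set v : ℝ≥0 := ⟨σ ^ 2, sq_nonneg σ⟩
  have hv : v ≠ 0 := by rw [← NNReal.coe_ne_zero]; exact pow_ne_zero 2 hσ0.ne'
  set B := {x | ε < gaussianPrivacyLoss μ μ' v x}
  have hB : MeasurableSet B :=
    measurableSet_lt measurable_const (measurable_gaussianPrivacyLoss _ _ _)
  calc gaussianReal μ v S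
      ≤ gaussianReal μ v (S \ B) + gaussianReal μ v B := by
        rw [add_comm]
        exact (measure_le_inter_add_sdiff _ S B).trans (by gcongr; exact inter_subset_right)
    _ ≤ ENNReal.ofReal (rexp ε) * gaussianReal μ' v S + ENNReal.ofReal δ := by
        gcongr ?_ + ?_
        · exact (gaussianReal_apply_le_exp_mul hv (hS.diff hB) fun x hx => not_lt.mp hx.2).trans
            (by gcongr; exact sdiff_subset)
        · calc gaussianReal μ v B
              ≤ gaussianReal 0 1 (Ioi (σ * ε / Δ - Δ / (2 * σ))) :=
                gaussianReal_privacyLoss_gt_le rfl hσ0 hε0.le hΔ hμ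
            _ ≤ ENNReal.ofReal δ := by
                rw [hthreshold]; exact gaussianReal_Ioi_sqrt_log_le hε0 hε1 hδ0 hδ1
end

section
/- Almost-sure finiteness of the PrivSPRT stopping time: suppose σ₂ > 0 and the observations are i.i.d. (drawn from f₀ or from f₁). Then, conditionally on any values z_a, z_b of the threshold noises Z_a, Z_b, the PrivSPRT stopping time T is finite almost surely, i.e. P_i(T = ∞ | Z_a = z_a, Z_b = z_b) = 0 for i = 0, 1; consequently the conditional expectation E_i[T | Z_a, Z_b] is finite. -/
open MeasureTheory ProbabilityTheory Real Finset
open scoped Classical ENNReal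

/-- The `A`-truncated (clamped) individual log-likelihood ratio. -/
noncomputable def truncLL {𝒳 : Type*} (f₀ f₁ : 𝒳 → ℝ) (A : ℝ) (y : 𝒳) : ℝ :=
  max (-A) (min A (Real.log (f₁ y / f₀ y)))

/-- The `A`-truncated cumulative log-likelihood ratio `ℓ_t(A)` of a sequence. -/
noncomputable def truncLLR {𝒳 : Type*} (f₀ f₁ : 𝒳 → ℝ) (A : ℝ) (x : ℕ → 𝒳) (t : ℕ) : ℝ :=
  ∑ i ∈ Finset.range t, truncLL f₀ f₁ A (x i)

/-- The set of times `t ≥ 1` at which PrivSPRT's stopping condition holds, for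
realized threshold noises `za, zb` and per-step noises `zta, ztb`. -/
noncomputable def privSPRTHitSet {𝒳 : Type*} (f₀ f₁ : 𝒳 → ℝ) (A a b : ℝ) (x : ℕ → 𝒳)
    (za zb : ℝ) (zta ztb : ℕ → ℝ) : Set ℕ :=
  {t : ℕ | 1 ≤ t ∧ (b + zb < truncLLR f₀ f₁ A x t + ztb t ∨
    truncLLR f₀ f₁ A x t + zta t < -a + za)}

/-- The PrivSPRT stopping time (`∞` if the stopping condition never holds). -/
noncomputable def privSPRTStopTime {𝒳 : Type*} (f₀ f₁ : 𝒳 → ℝ) (A a b : ℝ) (x : ℕ → 𝒳)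
    (za zb : ℝ) (zta ztb : ℕ → ℝ) : ℕ∞ :=
  sInf ((fun n : ℕ => (n : ℕ∞)) '' privSPRTHitSet f₀ f₁ A a b x za zb zta ztb)

/-- The PrivSPRT decision: `1` (reject `H₀`) if the upper threshold was crossed
at the stopping time, `0` (accept `H₀`) otherwise. -/
noncomputable def privSPRTDecision {𝒳 : Type*} (f₀ f₁ : 𝒳 → ℝ) (A a b : ℝ) (x : ℕ → 𝒳)
    (za zb : ℝ) (zta ztb : ℕ → ℝ) : ℕ :=
  if (privSPRTHitSet f₀ f₁ A a b x za zb zta ztb).Nonempty then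
    (if b + zb < truncLLR f₀ f₁ A x (sInf (privSPRTHitSet f₀ f₁ A a b x za zb zta ztb)) +
        ztb (sInf (privSPRTHitSet f₀ f₁ A a b x za zb zta ztb)) then 1 else 0)
  else 0

section Aux

open MeasureTheory ProbabilityTheory Real Finset
open scoped Classical ENNReal NNReal

lemma gaussianReal_pos_aux {v : ℝ≥0} (hv : v ≠ 0) (μ : ℝ) {s : Set ℝ}
    (h : 0 < volume s) : 0 < gaussianReal μ v s := by
  rw [gaussianReal_apply μ hv s]
  rw [lintegral_pos_iff_support (measurable_gaussianPDF μ v)]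
  have hsupp : Function.support (gaussianPDF μ v) = Set.univ :=
    Set.eq_univ_of_forall fun x =>
      (ENNReal.ofReal_pos.mpr (gaussianPDFReal_pos μ v x hv)).ne'
  rw [hsupp, Measure.restrict_apply_univ]
  exact h

lemma enat_coe_ennreal_eq_tsum (m : ℕ∞) :
    (m : ℝ≥0∞) = ∑' n : ℕ, if (n : ℕ∞) < m then (1 : ℝ≥0∞) else 0 := by
  induction m using ENat.recTopCoe with
  | top =>
    rw [tsum_congr (fun n => if_pos (by exact lt_top_iff_ne_top.mpr (by simp)))]
    simp [ENNReal.tsum_const_eq_top_of_ne_zero one_ne_zero]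
  | coe k =>
    rw [tsum_eq_sum (s := Finset.range k)
        (fun n hn => if_neg (by
          simp only [Finset.mem_range, not_lt] at hn
          exact fun h => absurd (by exact_mod_cast h) (not_lt.mpr hn)))]
    rw [Finset.sum_congr rfl (fun n hn => if_pos (by
      exact_mod_cast Finset.mem_range.mp hn))]
    simp

lemma measurable_truncLLR_pi {𝒳 : Type*} [MeasurableSpace 𝒳] {f₀ f₁ : 𝒳 → ℝ}
    (hf₀m : Measurable f₀) (hf₁m : Measurable f₁) (A : ℝ) (t : ℕ) :
    Measurable (fun x : ℕ → 𝒳 => truncLLR f₀ f₁ A x t) := by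
  unfold truncLLR truncLL
  exact Finset.measurable_sum _ fun i _ =>
    measurable_const.max (measurable_const.min
      (Real.measurable_log.comp ((hf₁m.comp (measurable_pi_apply i)).div
        (hf₀m.comp (measurable_pi_apply i)))))

lemma privSPRT_inner_bound {Ω : Type*} [MeasurableSpace Ω] (P : Measure Ω)
    [IsProbabilityMeasure P] (σ₂ : ℝ) (a b za zb : ℝ)
    (Za Zb : Ω → ℝ) (Zta Ztb : ℕ → Ω → ℝ)
    (hZtam : ∀ t, Measurable (Zta t)) (hZtbm : ∀ t, Measurable (Ztb t))
    (hZta : ∀ t, Measure.map (Zta t) P = gaussianReal 0 ⟨σ₂ ^ 2, sq_nonneg σ₂⟩)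
    (hZtb : ∀ t, Measure.map (Ztb t) P = gaussianReal 0 ⟨σ₂ ^ 2, sq_nonneg σ₂⟩)
    (hindepN : iIndepFun (ι := Bool ⊕ Bool × ℕ)
      (Sum.elim (fun s => if s then Zb else Za)
        (fun p => if p.1 then Ztb p.2 else Zta p.2)) P)
    (ℓ : ℕ → ℝ) (n : ℕ) :
    P {ω | ∀ t ∈ Finset.Icc 1 n,
        ℓ t + Ztb t ω ≤ b + zb ∧ -a + za ≤ ℓ t + Zta t ω} ≤
      (1 - min (gaussianReal 0 ⟨σ₂ ^ 2, sq_nonneg σ₂⟩ (Set.Ioi (b + zb)))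
        (gaussianReal 0 ⟨σ₂ ^ 2, sq_nonneg σ₂⟩ (Set.Iio (-a + za)))) ^ n := by
  classical
  set G := gaussianReal 0 ⟨σ₂ ^ 2, sq_nonneg σ₂⟩ with hG
  set q : ℝ≥0∞ := 1 - min (G (Set.Ioi (b + zb))) (G (Set.Iio (-a + za))) with hq
  set N := Sum.elim (fun s : Bool => if s then Zb else Za)
    (fun p : Bool × ℕ => if p.1 then Ztb p.2 else Zta p.2) with hN
  set idx : ℕ → Bool ⊕ Bool × ℕ := fun t => Sum.inr (if 0 ≤ ℓ t then true else false, t)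
    with hidx
  set C : Bool ⊕ Bool × ℕ → Set Ω := fun j =>
    Sum.elim (fun _ : Bool => Set.univ)
      (fun p : Bool × ℕ => (if p.1 then Ztb p.2 else Zta p.2) ⁻¹'
        (if p.1 then Set.Iic (b + zb - ℓ p.2) else Set.Ici (-a + za - ℓ p.2))) j with hC
  have hidx_inj : ∀ s ∈ Finset.Icc 1 n, ∀ t ∈ Finset.Icc 1 n, idx s = idx t → s = t := by
    intro s _ t _ h
    have h' := Sum.inr.inj h
    exact congrArg Prod.snd h'
  -- the target set is contained in the intersection of the chosen one-sided events
  have hsub : {ω | ∀ t ∈ Finset.Icc 1 n,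
      ℓ t + Ztb t ω ≤ b + zb ∧ -a + za ≤ ℓ t + Zta t ω} ⊆
      ⋂ t ∈ Finset.Icc 1 n, C (idx t) := by
    intro ω hω
    simp only [Set.mem_iInter]
    intro t ht
    obtain ⟨h1, h2⟩ := hω t ht
    by_cases h : 0 ≤ ℓ t
    · simp only [hC, hidx, if_pos h, Sum.elim_inr, if_true, Set.mem_preimage,
        Set.mem_Iic]
      linarith
    · simp only [hC, hidx, if_neg h, Sum.elim_inr, if_false, Set.mem_preimage,
        Set.mem_Ici, Bool.false_eq_true]
      linarith
  -- measurability of the events w.r.t. the comap σ-algebras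
  have hmeas : ∀ j ∈ (Finset.Icc 1 n).image idx,
      MeasurableSet[(inferInstance : MeasurableSpace ℝ).comap (N j)] (C j) := by
    intro j hj
    obtain ⟨t, _, rfl⟩ := Finset.mem_image.mp hj
    by_cases h : 0 ≤ ℓ t
    · simp only [hC, hidx, if_pos h, Sum.elim_inr, if_true]
      exact ⟨Set.Iic (b + zb - ℓ t), measurableSet_Iic, by simp [hN, hidx, if_pos h]⟩
    · simp only [hC, hidx, if_neg h, Sum.elim_inr, if_false, Bool.false_eq_true]
      exact ⟨Set.Ici (-a + za - ℓ t), measurableSet_Ici, by simp [hN, hidx, if_neg h]⟩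
  have hind := hindepN.meas_biInter (S := (Finset.Icc 1 n).image idx) (s := C) hmeas
  -- bound each factor by q
  have hfac : ∀ t ∈ Finset.Icc 1 n, P (C (idx t)) ≤ q := by
    intro t _
    by_cases h : 0 ≤ ℓ t
    · have hCe : C (idx t) = Ztb t ⁻¹' Set.Iic (b + zb - ℓ t) := by
        simp [hC, hidx, if_pos h]
      rw [hCe, ← Measure.map_apply (hZtbm t) measurableSet_Iic, hZtb t]
      calc G (Set.Iic (b + zb - ℓ t)) ≤ G ((Set.Ioi (b + zb))ᶜ) := by
            refine measure_mono fun y hy => ?_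
            simp only [Set.mem_Iic] at hy
            simp only [Set.mem_compl_iff, Set.mem_Ioi, not_lt]
            linarith
        _ = 1 - G (Set.Ioi (b + zb)) := @prob_compl_eq_one_sub _ _ _ _ (instIsProbabilityMeasureGaussianReal _ _) measurableSet_Ioi
        _ ≤ q := tsub_le_tsub_left (min_le_left _ _) 1
    · have hCe : C (idx t) = Zta t ⁻¹' Set.Ici (-a + za - ℓ t) := by
        simp [hC, hidx, if_neg h]
      rw [hCe, ← Measure.map_apply (hZtam t) measurableSet_Ici, hZta t]
      calc G (Set.Ici (-a + za - ℓ t)) ≤ G ((Set.Iio (-a + za))ᶜ) := by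
            refine measure_mono fun y hy => ?_
            simp only [Set.mem_Ici] at hy
            simp only [Set.mem_compl_iff, Set.mem_Iio, not_lt]
            push_neg at h
            linarith
        _ = 1 - G (Set.Iio (-a + za)) := @prob_compl_eq_one_sub _ _ _ _ (instIsProbabilityMeasureGaussianReal _ _) measurableSet_Iio
        _ ≤ q := tsub_le_tsub_left (min_le_right _ _) 1
  calc P {ω | ∀ t ∈ Finset.Icc 1 n,
        ℓ t + Ztb t ω ≤ b + zb ∧ -a + za ≤ ℓ t + Zta t ω}
      ≤ P (⋂ t ∈ Finset.Icc 1 n, C (idx t)) := measure_mono hsub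
    _ = P (⋂ j ∈ (Finset.Icc 1 n).image idx, C j) := by
        rw [Finset.set_biInter_finset_image]
    _ = ∏ j ∈ (Finset.Icc 1 n).image idx, P (C j) := hind
    _ = ∏ t ∈ Finset.Icc 1 n, P (C (idx t)) := Finset.prod_image hidx_inj
    _ ≤ ∏ _t ∈ Finset.Icc 1 n, q := Finset.prod_le_prod' hfac
    _ = q ^ n := by rw [Finset.prod_const, Nat.card_Icc]; norm_num

end Aux

section Key

open MeasureTheory ProbabilityTheory Real Finset
open scoped Classical ENNReal NNReal

lemma privSPRT_key {𝒳 Ω : Type*} [MeasurableSpace 𝒳] [MeasurableSpace Ω]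
    (f₀ f₁ : 𝒳 → ℝ) (hf₀m : Measurable f₀) (hf₁m : Measurable f₁)
    (A a b σ₂ : ℝ) (hσ₂ : 0 < σ₂)
    (P : Measure Ω) [IsProbabilityMeasure P]
    (Za Zb : Ω → ℝ) (Zta Ztb : ℕ → Ω → ℝ)
    (hZam : Measurable Za) (hZbm : Measurable Zb)
    (hZtam : ∀ t, Measurable (Zta t)) (hZtbm : ∀ t, Measurable (Ztb t))
    (hZta : ∀ t, Measure.map (Zta t) P = gaussianReal 0 ⟨σ₂ ^ 2, sq_nonneg σ₂⟩)
    (hZtb : ∀ t, Measure.map (Ztb t) P = gaussianReal 0 ⟨σ₂ ^ 2, sq_nonneg σ₂⟩)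
    (hindepN : iIndepFun (ι := Bool ⊕ Bool × ℕ)
      (Sum.elim (fun s => if s then Zb else Za)
        (fun p => if p.1 then Ztb p.2 else Zta p.2)) P)
    (X : ℕ → Ω → 𝒳) (hXm : ∀ i, Measurable (X i))
    (hindepNX : IndepFun
      (fun ω (j : Bool ⊕ Bool × ℕ) => Sum.elim (fun s => if s then Zb else Za)
        (fun p => if p.1 then Ztb p.2 else Zta p.2) j ω)
      (fun ω (i : ℕ) => X i ω) P)
    (za zb : ℝ) :
    P {ω | privSPRTStopTime f₀ f₁ A a b (fun i => X i ω) za zb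
        (fun t => Zta t ω) (fun t => Ztb t ω) = ⊤} = 0 ∧
    (∫⁻ ω, (privSPRTStopTime f₀ f₁ A a b (fun i => X i ω) za zb
        (fun t => Zta t ω) (fun t => Ztb t ω) : ℕ∞) ∂P) < ⊤ := by
  classical
  set G := gaussianReal 0 ⟨σ₂ ^ 2, sq_nonneg σ₂⟩ with hG
  set q : ℝ≥0∞ := 1 - min (G (Set.Ioi (b + zb))) (G (Set.Iio (-a + za))) with hq
  -- q < 1
  have hv : (⟨σ₂ ^ 2, sq_nonneg σ₂⟩ : ℝ≥0) ≠ 0 := by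
    intro h
    have h2 : σ₂ ^ 2 = 0 := congrArg NNReal.toReal h
    nlinarith
  have hp : 0 < min (G (Set.Ioi (b + zb))) (G (Set.Iio (-a + za))) := by
    refine lt_min ?_ ?_
    · exact gaussianReal_pos_aux hv 0 (by simp [Real.volume_Ioi])
    · exact gaussianReal_pos_aux hv 0 (by simp [Real.volume_Iio])
  have hq1 : q < 1 := ENNReal.sub_lt_self ENNReal.one_ne_top one_ne_zero hp.ne'
  -- the "no stopping up to time n" events
  set D : ℕ → Set Ω := fun n => {ω | ∀ t ∈ Finset.Icc 1 n,
      truncLLR f₀ f₁ A (fun i => X i ω) t + Ztb t ω ≤ b + zb ∧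
      -a + za ≤ truncLLR f₀ f₁ A (fun i => X i ω) t + Zta t ω} with hD
  have htruncm : ∀ t, Measurable (fun ω => truncLLR f₀ f₁ A (fun i => X i ω) t) :=
    fun t => (measurable_truncLLR_pi hf₀m hf₁m A t).comp (measurable_pi_lambda _ hXm)
  have hDmeas : ∀ n, MeasurableSet (D n) := by
    intro n
    have : D n = ⋂ t, ⋂ (_ : t ∈ Finset.Icc 1 n),
        ({ω | truncLLR f₀ f₁ A (fun i => X i ω) t + Ztb t ω ≤ b + zb} ∩
         {ω | -a + za ≤ truncLLR f₀ f₁ A (fun i => X i ω) t + Zta t ω}) := by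
      ext ω; simp [hD, forall_and]
    rw [this]
    refine MeasurableSet.iInter fun t => MeasurableSet.iInter fun _ => ?_
    exact ((measurableSet_le ((htruncm t).add (hZtbm t)) measurable_const)).inter
      (measurableSet_le measurable_const ((htruncm t).add (hZtam t)))
  -- the Fubini bound  P (D n) ≤ q ^ n
  set NV : Ω → (Bool ⊕ Bool × ℕ) → ℝ := fun ω j => Sum.elim (fun s => if s then Zb else Za)
      (fun p => if p.1 then Ztb p.2 else Zta p.2) j ω with hNV
  set XV : Ω → ℕ → 𝒳 := fun ω i => X i ω with hXV
  have hNVm : Measurable NV := by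
    refine measurable_pi_lambda _ fun j => ?_
    rcases j with s | ⟨c, t⟩
    · cases s
      · simpa [hNV] using hZam
      · simpa [hNV] using hZbm
    · cases c
      · simpa [hNV] using hZtam t
      · simpa [hNV] using hZtbm t
  have hXVm : Measurable XV := measurable_pi_lambda _ hXm
  have hmap : P.map (fun ω => (XV ω, NV ω)) = (P.map XV).prod (P.map NV) :=
    (indepFun_iff_map_prod_eq_prod_map_map hXVm.aemeasurable hNVm.aemeasurable).mp
      hindepNX.symm
  have hDbound : ∀ n, P (D n) ≤ q ^ n := by
    intro n
    set En : Set ((ℕ → 𝒳) × ((Bool ⊕ Bool × ℕ) → ℝ)) := ⋂ t, ⋂ (_ : t ∈ Finset.Icc 1 n),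
        ({p : (ℕ → 𝒳) × ((Bool ⊕ Bool × ℕ) → ℝ) |
            truncLLR f₀ f₁ A p.1 t + p.2 (Sum.inr (true, t)) ≤ b + zb} ∩
         {p : (ℕ → 𝒳) × ((Bool ⊕ Bool × ℕ) → ℝ) |
            -a + za ≤ truncLLR f₀ f₁ A p.1 t + p.2 (Sum.inr (false, t))}) with hEn
    have hEnm : MeasurableSet En := by
      refine MeasurableSet.iInter fun t => MeasurableSet.iInter fun _ => ?_
      refine MeasurableSet.inter ?_ ?_
      · exact measurableSet_le
          (((measurable_truncLLR_pi hf₀m hf₁m A t).comp measurable_fst).add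
            ((measurable_pi_apply _).comp measurable_snd)) measurable_const
      · exact measurableSet_le measurable_const
          (((measurable_truncLLR_pi hf₀m hf₁m A t).comp measurable_fst).add
            ((measurable_pi_apply _).comp measurable_snd))
    have hDpre : D n = (fun ω => (XV ω, NV ω)) ⁻¹' En := by
      ext ω
      simp only [hD, hEn, Set.mem_setOf_eq, Set.mem_preimage, Set.mem_iInter,
        Set.mem_inter_iff, hNV, hXV, Sum.elim_inr, if_true, Bool.false_eq_true, if_false,
        forall_and]
    have hsec : ∀ x : ℕ → 𝒳, (P.map NV) (Prod.mk x ⁻¹' En) ≤ q ^ n := by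
      intro x
      rw [Measure.map_apply hNVm (measurable_prodMk_left hEnm)]
      have heq : NV ⁻¹' (Prod.mk x ⁻¹' En) = {ω | ∀ t ∈ Finset.Icc 1 n,
          truncLLR f₀ f₁ A x t + Ztb t ω ≤ b + zb ∧
          -a + za ≤ truncLLR f₀ f₁ A x t + Zta t ω} := by
        ext ω
        simp only [hEn, Set.mem_preimage, Set.mem_iInter, Set.mem_inter_iff,
          Set.mem_setOf_eq, hNV, Sum.elim_inr, if_true, Bool.false_eq_true, if_false,
          forall_and]
      rw [heq]
      exact privSPRT_inner_bound P σ₂ a b za zb Za Zb Zta Ztb hZtam hZtbm hZta hZtb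
        hindepN (fun t => truncLLR f₀ f₁ A x t) n
    have hprob : IsProbabilityMeasure (P.map XV) := Measure.isProbabilityMeasure_map hXVm.aemeasurable
    calc P (D n) = P.map (fun ω => (XV ω, NV ω)) En := by
          rw [Measure.map_apply (hXVm.prodMk hNVm) hEnm, ← hDpre]
      _ = ((P.map XV).prod (P.map NV)) En := by rw [hmap]
      _ = ∫⁻ x, (P.map NV) (Prod.mk x ⁻¹' En) ∂(P.map XV) := Measure.prod_apply hEnm
      _ ≤ ∫⁻ _, q ^ n ∂(P.map XV) := lintegral_mono fun x => hsec x
      _ = q ^ n := by simp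
  -- relation between D n and the stopping time
  have hmem : ∀ (ω : Ω) (n : ℕ), ω ∈ D n ↔ (n : ℕ∞) <
      privSPRTStopTime f₀ f₁ A a b (fun i => X i ω) za zb
        (fun t => Zta t ω) (fun t => Ztb t ω) := by
    intro ω n
    constructor
    · intro hω
      have hle : ((n + 1 : ℕ) : ℕ∞) ≤ sInf ((fun k : ℕ => (k : ℕ∞)) ''
          privSPRTHitSet f₀ f₁ A a b (fun i => X i ω) za zb
            (fun t => Zta t ω) (fun t => Ztb t ω)) := by
        refine le_sInf fun m hm => ?_
        obtain ⟨t, htH, rfl⟩ := hm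
        obtain ⟨ht1, htc⟩ := htH
        have htn : n < t := by
          by_contra hcon
          push_neg at hcon
          obtain ⟨h1, h2⟩ := hω t (Finset.mem_Icc.mpr ⟨ht1, hcon⟩)
          rcases htc with hc | hc
          · exact absurd hc (not_lt.mpr h1)
          · exact absurd hc (not_lt.mpr h2)
        show ((n + 1 : ℕ) : ℕ∞) ≤ (t : ℕ∞)
        exact_mod_cast htn
      exact lt_of_lt_of_le (by exact_mod_cast Nat.lt_succ_self n) hle
    · intro hlt t ht
      obtain ⟨ht1, htn⟩ := Finset.mem_Icc.mp ht
      by_contra hcon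
      rw [not_and_or, not_le, not_le] at hcon
      have htH : t ∈ privSPRTHitSet f₀ f₁ A a b (fun i => X i ω) za zb
          (fun t => Zta t ω) (fun t => Ztb t ω) := ⟨ht1, hcon⟩
      have hsle : privSPRTStopTime f₀ f₁ A a b (fun i => X i ω) za zb
          (fun t => Zta t ω) (fun t => Ztb t ω) ≤ (t : ℕ∞) :=
        sInf_le ⟨t, htH, rfl⟩
      have : (n : ℕ∞) < (t : ℕ∞) := lt_of_lt_of_le hlt hsle
      exact absurd (by exact_mod_cast this) (not_lt.mpr htn)
  constructor
  · -- the stopping time is a.s. finite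
    have hsub : ∀ n : ℕ, {ω | privSPRTStopTime f₀ f₁ A a b (fun i => X i ω) za zb
        (fun t => Zta t ω) (fun t => Ztb t ω) = ⊤} ⊆ D n := by
      intro n ω hω
      rw [Set.mem_setOf_eq] at hω
      exact (hmem ω n).mpr (hω ▸ lt_top_iff_ne_top.mpr (by simp))
    have hle : ∀ n : ℕ, P {ω | privSPRTStopTime f₀ f₁ A a b (fun i => X i ω) za zb
        (fun t => Zta t ω) (fun t => Ztb t ω) = ⊤} ≤ q ^ n :=
      fun n => le_trans (measure_mono (hsub n)) (hDbound n)
    refine le_antisymm ?_ zero_le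
    exact ge_of_tendsto (ENNReal.tendsto_pow_atTop_nhds_zero_of_lt_one hq1)
      (Filter.Eventually.of_forall hle)
  · -- the expected stopping time is finite
    have hpt : ∀ ω : Ω, ((privSPRTStopTime f₀ f₁ A a b (fun i => X i ω) za zb
        (fun t => Zta t ω) (fun t => Ztb t ω) : ℕ∞) : ℝ≥0∞) =
        ∑' n : ℕ, Set.indicator (D n) (fun _ => (1 : ℝ≥0∞)) ω := by
      intro ω
      rw [enat_coe_ennreal_eq_tsum]
      refine tsum_congr fun n => ?_
      by_cases hω : ω ∈ D n
      · rw [Set.indicator_of_mem hω, if_pos ((hmem ω n).mp hω)]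
      · rw [Set.indicator_of_notMem hω, if_neg (fun h => hω ((hmem ω n).mpr h))]
    calc (∫⁻ ω, (privSPRTStopTime f₀ f₁ A a b (fun i => X i ω) za zb
          (fun t => Zta t ω) (fun t => Ztb t ω) : ℕ∞) ∂P)
        = ∫⁻ ω, ∑' n : ℕ, Set.indicator (D n) (fun _ => (1 : ℝ≥0∞)) ω ∂P :=
          lintegral_congr hpt
      _ = ∑' n : ℕ, ∫⁻ ω, Set.indicator (D n) (fun _ => (1 : ℝ≥0∞)) ω ∂P :=
          lintegral_tsum fun n => ((measurable_one.indicator (hDmeas n)).aemeasurable)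
      _ = ∑' n : ℕ, P (D n) := tsum_congr fun n => lintegral_indicator_one (hDmeas n)
      _ ≤ ∑' n : ℕ, q ^ n := ENNReal.tsum_le_tsum hDbound
      _ = (1 - q)⁻¹ := ENNReal.tsum_geometric q
      _ < ⊤ := ENNReal.inv_lt_top.mpr (tsub_pos_of_lt hq1)

end Key

/-- almost-sure finiteness of the PrivSPRT stopping time: with
`σ₂ > 0` and i.i.d. observations (drawn from `f₀` under `P₀` or from `f₁` under
`P₁`), conditionally on any values `za, zb` of the threshold noises the PrivSPRT
stopping time is finite almost surely, i.e.
`P_i(T = ∞ | Z_a = za, Z_b = zb) = 0` for `i = 0, 1`; consequently the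
conditional expectation `E_i[T | Z_a, Z_b]` is finite. -/
theorem privSPRT_stopping_time_finite
    {𝒳 Ω : Type*} [MeasurableSpace 𝒳] [MeasurableSpace Ω]
    (ν : Measure 𝒳) [SigmaFinite ν]
    (f₀ f₁ : 𝒳 → ℝ) (hf₀ : ∀ y, 0 < f₀ y) (hf₁ : ∀ y, 0 < f₁ y)
    (hf₀m : Measurable f₀) (hf₁m : Measurable f₁)
    (hf₀p : IsProbabilityMeasure (ν.withDensity fun y => ENNReal.ofReal (f₀ y)))
    (hf₁p : IsProbabilityMeasure (ν.withDensity fun y => ENNReal.ofReal (f₁ y)))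
    (A a b σ₁ σ₂ : ℝ) (hA : 0 < A) (ha : 0 < a) (hb : 0 < b)
    (hσ₁ : 0 < σ₁) (hσ₂ : 0 < σ₂)
    -- the probability measures corresponding to `H₀` and `H₁`
    (P₀ P₁ : Measure Ω) [IsProbabilityMeasure P₀] [IsProbabilityMeasure P₁]
    -- the noise random variables
    (Za Zb : Ω → ℝ) (Zta Ztb : ℕ → Ω → ℝ)
    (hZam : Measurable Za) (hZbm : Measurable Zb)
    (hZtam : ∀ t, Measurable (Zta t)) (hZtbm : ∀ t, Measurable (Ztb t))
    (hZa₀ : Measure.map Za P₀ = gaussianReal 0 ⟨σ₁ ^ 2, sq_nonneg σ₁⟩)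
    (hZb₀ : Measure.map Zb P₀ = gaussianReal 0 ⟨σ₁ ^ 2, sq_nonneg σ₁⟩)
    (hZta₀ : ∀ t, Measure.map (Zta t) P₀ = gaussianReal 0 ⟨σ₂ ^ 2, sq_nonneg σ₂⟩)
    (hZtb₀ : ∀ t, Measure.map (Ztb t) P₀ = gaussianReal 0 ⟨σ₂ ^ 2, sq_nonneg σ₂⟩)
    (hZa₁ : Measure.map Za P₁ = gaussianReal 0 ⟨σ₁ ^ 2, sq_nonneg σ₁⟩)
    (hZb₁ : Measure.map Zb P₁ = gaussianReal 0 ⟨σ₁ ^ 2, sq_nonneg σ₁⟩)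
    (hZta₁ : ∀ t, Measure.map (Zta t) P₁ = gaussianReal 0 ⟨σ₂ ^ 2, sq_nonneg σ₂⟩)
    (hZtb₁ : ∀ t, Measure.map (Ztb t) P₁ = gaussianReal 0 ⟨σ₂ ^ 2, sq_nonneg σ₂⟩)
    -- the observations, i.i.d. with density `f₀` under `P₀` and `f₁` under `P₁`
    (X : ℕ → Ω → 𝒳) (hXm : ∀ i, Measurable (X i))
    (hX₀ : ∀ i, Measure.map (X i) P₀ = ν.withDensity fun y => ENNReal.ofReal (f₀ y))
    (hX₁ : ∀ i, Measure.map (X i) P₁ = ν.withDensity fun y => ENNReal.ofReal (f₁ y))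
    -- the noises are mutually independent, the observations are independent,
    -- and the observations are independent of all the noise (under both measures)
    (hindepN₀ : iIndepFun (ι := Bool ⊕ Bool × ℕ)
      (Sum.elim (fun s => if s then Zb else Za)
        (fun p => if p.1 then Ztb p.2 else Zta p.2)) P₀)
    (hindepN₁ : iIndepFun (ι := Bool ⊕ Bool × ℕ)
      (Sum.elim (fun s => if s then Zb else Za)
        (fun p => if p.1 then Ztb p.2 else Zta p.2)) P₁)
    (hindepX₀ : iIndepFun X P₀)
    (hindepX₁ : iIndepFun X P₁)
    (hindepNX₀ : IndepFun
      (fun ω (j : Bool ⊕ Bool × ℕ) => Sum.elim (fun s => if s then Zb else Za)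
        (fun p => if p.1 then Ztb p.2 else Zta p.2) j ω)
      (fun ω (i : ℕ) => X i ω) P₀)
    (hindepNX₁ : IndepFun
      (fun ω (j : Bool ⊕ Bool × ℕ) => Sum.elim (fun s => if s then Zb else Za)
        (fun p => if p.1 then Ztb p.2 else Zta p.2) j ω)
      (fun ω (i : ℕ) => X i ω) P₁)
    -- the PrivSPRT stopping time and decision as random variables
    (T : Ω → ℕ∞) (d : Ω → ℕ)
    (hT : ∀ ω, T ω = privSPRTStopTime f₀ f₁ A a b (fun i => X i ω) (Za ω) (Zb ω)
      (fun t => Zta t ω) (fun t => Ztb t ω))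
    (hd : ∀ ω, d ω = privSPRTDecision f₀ f₁ A a b (fun i => X i ω) (Za ω) (Zb ω)
      (fun t => Zta t ω) (fun t => Ztb t ω))
    :
    ∀ za zb : ℝ,
      (P₀ {ω | privSPRTStopTime f₀ f₁ A a b (fun i => X i ω) za zb
          (fun t => Zta t ω) (fun t => Ztb t ω) = ⊤} = 0 ∧
        P₁ {ω | privSPRTStopTime f₀ f₁ A a b (fun i => X i ω) za zb
          (fun t => Zta t ω) (fun t => Ztb t ω) = ⊤} = 0) ∧
      ((∫⁻ ω, (privSPRTStopTime f₀ f₁ A a b (fun i => X i ω) za zb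
          (fun t => Zta t ω) (fun t => Ztb t ω) : ℕ∞) ∂P₀) < ⊤ ∧
        (∫⁻ ω, (privSPRTStopTime f₀ f₁ A a b (fun i => X i ω) za zb
          (fun t => Zta t ω) (fun t => Ztb t ω) : ℕ∞) ∂P₁) < ⊤) := by
  intro za zb
  have h0 := privSPRT_key f₀ f₁ hf₀m hf₁m A a b σ₂ hσ₂ P₀ Za Zb Zta Ztb hZam hZbm
    hZtam hZtbm hZta₀ hZtb₀ hindepN₀ X hXm hindepNX₀ za zb
  have h1 := privSPRT_key f₀ f₁ hf₀m hf₁m A a b σ₂ hσ₂ P₁ Za Zb Zta Ztb hZam hZbm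
    hZtam hZtbm hZta₁ hZtb₁ hindepN₁ X hXm hindepNX₁ za zb
  exact ⟨⟨h0.1, h1.1⟩, h0.2, h1.2⟩
end

section
/- Let A > 0, m > 0 and b ≥ 0, and set ρ = 1 − exp(−m²/(2A²)). Then for all integers i, j with 1 ≤ i ≤ j, ∑_{t=i}^{j} exp(−(b − m t)²/(2 t A²)) ≤ ρ⁻¹ · exp(−b²/(2 j A²) + b m / A²) · exp(−m² i/(2A²)). -/
open Real Finset

/-- For `A > 0`, `m > 0`, `b ≥ 0` and `ρ = 1 - exp (-m² / (2A²))`,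
for all integers `1 ≤ i ≤ j`,
`∑_{t=i}^{j} exp (-(b - m t)² / (2 t A²)) ≤ ρ⁻¹ · exp (-b²/(2jA²) + bm/A²) · exp (-m² i/(2A²))`. -/
theorem sum_exp_quadratic_bound (A m b : ℝ) (hA : 0 < A) (hm : 0 < m) (hb : 0 ≤ b)
    (ρ : ℝ) (hρ : ρ = 1 - Real.exp (-(m ^ 2) / (2 * A ^ 2)))
    (i j : ℕ) (hi : 1 ≤ i) (hij : i ≤ j) :
    ∑ t ∈ Finset.Icc i j, Real.exp (-(b - m * t) ^ 2 / (2 * t * A ^ 2)) ≤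
      ρ⁻¹ * Real.exp (-(b ^ 2) / (2 * j * A ^ 2) + b * m / A ^ 2) *
        Real.exp (-(m ^ 2) * i / (2 * A ^ 2)) := by
  set r : ℝ := Real.exp (-(m ^ 2) / (2 * A ^ 2)) with hr
  set C : ℝ := Real.exp (-(b ^ 2) / (2 * j * A ^ 2) + b * m / A ^ 2) with hC
  have hA2 : (0:ℝ) < A ^ 2 := by positivity
  have hr0 : 0 < r := Real.exp_pos _
  have hr1 : r < 1 := by
    rw [hr, Real.exp_lt_one_iff, neg_div, neg_lt_zero]
    positivity
  have hjpos : (0:ℝ) < (j:ℝ) := by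
    have : 1 ≤ j := le_trans hi hij
    exact_mod_cast Nat.lt_of_lt_of_le Nat.zero_lt_one this
  have key : ∀ t ∈ Finset.Icc i j,
      Real.exp (-(b - m * t) ^ 2 / (2 * t * A ^ 2)) ≤ C * r ^ t := by
    intro t ht
    simp only [Finset.mem_Icc] at ht
    have htpos : (0:ℝ) < (t:ℝ) := by
      have : 1 ≤ t := le_trans hi ht.1
      exact_mod_cast Nat.lt_of_lt_of_le Nat.zero_lt_one this
    have htj : (t:ℝ) ≤ (j:ℝ) := by exact_mod_cast ht.2
    have heq : -(b - m * t) ^ 2 / (2 * t * A ^ 2)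
        = -(b ^ 2) / (2 * t * A ^ 2) + b * m / A ^ 2 + (t:ℝ) * (-(m ^ 2) / (2 * A ^ 2)) := by
      field_simp
      ring
    have hrt : r ^ t = Real.exp ((t:ℝ) * (-(m ^ 2) / (2 * A ^ 2))) := by
      rw [hr, ← Real.exp_nat_mul]
    rw [heq, hC, hrt, ← Real.exp_add, Real.exp_le_exp]
    have hdiv : -(b ^ 2) / (2 * t * A ^ 2) ≤ -(b ^ 2) / (2 * j * A ^ 2) := by
      rw [neg_div, neg_div, neg_le_neg_iff]
      apply div_le_div_of_nonneg_left (by positivity) (by positivity)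
      nlinarith
    linarith
  calc ∑ t ∈ Finset.Icc i j, Real.exp (-(b - m * t) ^ 2 / (2 * t * A ^ 2))
      ≤ ∑ t ∈ Finset.Icc i j, C * r ^ t := Finset.sum_le_sum key
    _ = C * ∑ t ∈ Finset.Icc i j, r ^ t := by rw [Finset.mul_sum]
    _ ≤ C * (r ^ i / (1 - r)) := by
        apply mul_le_mul_of_nonneg_left _ (Real.exp_pos _).le
        have : Finset.Icc i j = Finset.Ico i (j + 1) := by
          exact (Finset.Ico_add_one_right_eq_Icc i j).symm
        rw [this]
        exact geom_sum_Ico_le_of_lt_one hr0.le hr1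
    _ = ρ⁻¹ * C * Real.exp (-(m ^ 2) * i / (2 * A ^ 2)) := by
        have hri : r ^ i = Real.exp (-(m ^ 2) * i / (2 * A ^ 2)) := by
          rw [hr, ← Real.exp_nat_mul]
          congr 1
          ring
        rw [hρ, hri]
        field_simp
end

section
/- Let A > 0, m > 0 and b ≥ 0, and set ρ = 1 − exp(−m²/(2A²)). Then for every integer i ≥ 1, the infinite series satisfies ∑_{t=i}^{∞} exp(−(b − m t)²/(2 t A²)) ≤ ρ⁻¹ · exp(b m / A²) · exp(−m² i/(2A²)). -/
open Real

/-- For `A > 0`, `m > 0`, `b ≥ 0` and `ρ = 1 - exp (-m² / (2A²))`,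
for every integer `i ≥ 1`, the infinite series satisfies
`∑_{t=i}^{∞} exp (-(b - m t)² / (2 t A²)) ≤ ρ⁻¹ · exp (bm/A²) · exp (-m² i/(2A²))`. -/
theorem tsum_exp_quadratic_bound (A m b : ℝ) (hA : 0 < A) (hm : 0 < m) (hb : 0 ≤ b)
    (ρ : ℝ) (hρ : ρ = 1 - Real.exp (-(m ^ 2) / (2 * A ^ 2)))
    (i : ℕ) (hi : 1 ≤ i) :
    ∑' t : {t : ℕ // i ≤ t}, Real.exp (-(b - m * (t : ℕ)) ^ 2 / (2 * (t : ℕ) * A ^ 2)) ≤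
      ρ⁻¹ * Real.exp (b * m / A ^ 2) * Real.exp (-(m ^ 2) * i / (2 * A ^ 2)) := by
  have hA2 : (0:ℝ) < A ^ 2 := by positivity
  set r := Real.exp (-(m ^ 2) / (2 * A ^ 2)) with hr
  have hr0 : 0 < r := Real.exp_pos _
  have hr1 : r < 1 := by
    rw [hr, Real.exp_lt_one_iff, neg_div]
    have : (0:ℝ) < m ^ 2 / (2 * A ^ 2) := by positivity
    linarith
  have hρpos : 0 < ρ := by rw [hρ]; linarith
  set C := Real.exp (b * m / A ^ 2) with hC
  have hC0 : 0 < C := Real.exp_pos _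
  -- termwise bound
  have hle : ∀ t : {t : ℕ // i ≤ t},
      Real.exp (-(b - m * (t : ℕ)) ^ 2 / (2 * (t : ℕ) * A ^ 2)) ≤ C * r ^ (t : ℕ) := by
    rintro ⟨t, ht⟩
    have ht1 : (1:ℝ) ≤ (t:ℝ) := by exact_mod_cast le_trans hi ht
    have hT0 : (0:ℝ) < (t:ℝ) := by linarith
    have key : -(b - m * (t:ℝ)) ^ 2 / (2 * (t:ℝ) * A ^ 2) ≤
        b * m / A ^ 2 + (t:ℝ) * (-(m ^ 2) / (2 * A ^ 2)) := by
      rw [div_le_iff₀ (by positivity : (0:ℝ) < 2 * (t:ℝ) * A ^ 2)]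
      have heq : (b * m / A ^ 2 + (t:ℝ) * (-(m ^ 2) / (2 * A ^ 2))) * (2 * (t:ℝ) * A ^ 2)
          = 2 * b * m * (t:ℝ) - m ^ 2 * (t:ℝ) ^ 2 := by
        field_simp
        ring
      rw [heq]
      nlinarith [sq_nonneg b]
    calc Real.exp (-(b - m * (t:ℝ)) ^ 2 / (2 * (t:ℝ) * A ^ 2))
        ≤ Real.exp (b * m / A ^ 2 + (t:ℝ) * (-(m ^ 2) / (2 * A ^ 2))) := Real.exp_le_exp.mpr key
      _ = C * r ^ t := by
          rw [Real.exp_add, hC, hr, ← Real.exp_nat_mul]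
  have hsum_g : Summable (fun t : {t : ℕ // i ≤ t} => C * r ^ (t : ℕ)) := by
    have : Summable (fun t : ℕ => C * r ^ t) :=
      (summable_geometric_of_lt_one hr0.le hr1).mul_left C
    exact this.subtype (Set.Ici i)
  have hsum_f : Summable (fun t : {t : ℕ // i ≤ t} =>
      Real.exp (-(b - m * (t : ℕ)) ^ 2 / (2 * (t : ℕ) * A ^ 2))) :=
    Summable.of_nonneg_of_le (fun t => (Real.exp_pos _).le) hle hsum_g
  have hmain := Summable.tsum_le_tsum hle hsum_f hsum_g
  refine hmain.trans ?_
  -- compute the geometric tail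
  let e : ℕ ≃ {t : ℕ // i ≤ t} :=
    { toFun := fun n => ⟨n + i, Nat.le_add_left i n⟩
      invFun := fun t => t.1 - i
      left_inv := fun n => by simp
      right_inv := fun t => by
        rcases t with ⟨t, ht⟩
        simp only [Subtype.mk.injEq]
        omega }
  have hcalc : ∑' t : {t : ℕ // i ≤ t}, C * r ^ (t : ℕ) = C * r ^ i * (1 - r)⁻¹ := by
    rw [← e.tsum_eq]
    have : ∀ n : ℕ, C * r ^ ((e n : ℕ)) = (C * r ^ i) * r ^ n := by
      intro n
      show C * r ^ (n + i) = _
      rw [pow_add]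
      ring
    rw [tsum_congr this, tsum_mul_left, tsum_geometric_of_lt_one hr0.le hr1]
  rw [hcalc]
  have hri : r ^ i = Real.exp (-(m ^ 2) * i / (2 * A ^ 2)) := by
    rw [hr, ← Real.exp_nat_mul]
    congr 1
    ring
  rw [hri, hρ]
  ring_nf
  exact le_refl _
end

section
/- Let A > 0, m > 0 and b ≥ 0, and set ρ = 1 − exp(−m²/(2A²)). Then for all integers i, j with 1 ≤ i ≤ j, ∑_{t=i}^{j} exp(−(b + m t)²/(2 t A²)) ≤ ρ⁻¹ · exp(−b²/(2 j A²) − b m / A² − m² i/(2A²)). -/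
open Real Finset

/-- For `A > 0`, `m > 0`, `b ≥ 0` and `ρ = 1 - exp (-m² / (2A²))`,
for all integers `1 ≤ i ≤ j`,
`∑_{t=i}^{j} exp (-(b + m t)² / (2 t A²)) ≤ ρ⁻¹ · exp (-b²/(2jA²) - bm/A² - m² i/(2A²))`. -/
theorem sum_exp_quadratic_plus_bound (A m b : ℝ) (hA : 0 < A) (hm : 0 < m) (hb : 0 ≤ b)
    (ρ : ℝ) (hρ : ρ = 1 - Real.exp (-(m ^ 2) / (2 * A ^ 2)))
    (i j : ℕ) (hi : 1 ≤ i) (hij : i ≤ j) :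
    ∑ t ∈ Finset.Icc i j, Real.exp (-(b + m * t) ^ 2 / (2 * t * A ^ 2)) ≤
      ρ⁻¹ * Real.exp (-(b ^ 2) / (2 * j * A ^ 2) - b * m / A ^ 2 -
        m ^ 2 * i / (2 * A ^ 2)) := by
  have hA2 : (0:ℝ) < A ^ 2 := by positivity
  set r := Real.exp (-(m ^ 2) / (2 * A ^ 2)) with hr
  have hr0 : 0 < r := Real.exp_pos _
  have hr1 : r < 1 := by
    rw [hr, Real.exp_lt_one_iff]
    exact div_neg_of_neg_of_pos (by nlinarith) (by positivity)
  have hρ0 : 0 < ρ := by rw [hρ]; linarith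
  set C := Real.exp (-(b ^ 2) / (2 * j * A ^ 2) - b * m / A ^ 2) with hC
  have hC0 : 0 < C := Real.exp_pos _
  have hj0 : (0:ℝ) < (j:ℝ) := by
    have : 1 ≤ j := le_trans hi hij
    exact_mod_cast this
  -- termwise bound
  have hterm : ∀ t ∈ Finset.Icc i j,
      Real.exp (-(b + m * t) ^ 2 / (2 * t * A ^ 2)) ≤ C * r ^ t := by
    intro t ht
    simp only [Finset.mem_Icc] at ht
    have ht1 : 1 ≤ t := le_trans hi ht.1
    have ht0 : (0:ℝ) < (t:ℝ) := by exact_mod_cast ht1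
    have htj : (t:ℝ) ≤ (j:ℝ) := by exact_mod_cast ht.2
    rw [hC, hr, ← Real.exp_nat_mul, ← Real.exp_add]
    apply Real.exp_le_exp.mpr
    have key : -(b + m * t) ^ 2 / (2 * t * A ^ 2)
        = -(b ^ 2) / (2 * t * A ^ 2) - b * m / A ^ 2 + t * (-(m ^ 2) / (2 * A ^ 2)) := by
      field_simp
      ring
    rw [key]
    have h1 : -(b ^ 2) / (2 * t * A ^ 2) ≤ -(b ^ 2) / (2 * j * A ^ 2) := by
      rw [neg_div, neg_div, neg_le_neg_iff]
      apply div_le_div_of_nonneg_left (by positivity) (by positivity)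
      nlinarith
    linarith
  have hsum := Finset.sum_le_sum hterm
  -- geometric sum bound
  have hgeom : ∑ t ∈ Finset.Icc i j, r ^ t ≤ r ^ i * (1 - r)⁻¹ := by
    rw [← Finset.Ico_add_one_right_eq_Icc, Finset.sum_Ico_eq_sum_range]
    have : ∀ k ∈ Finset.range (j + 1 - i), r ^ (i + k) = r ^ i * r ^ k := by
      intro k _; rw [pow_add]
    rw [Finset.sum_congr rfl this, ← Finset.mul_sum]
    apply mul_le_mul_of_nonneg_left _ (by positivity)
    rw [geom_sum_eq (ne_of_lt hr1)]
    have h2 : (r ^ (j + 1 - i) - 1) / (r - 1) = (1 - r ^ (j + 1 - i)) / (1 - r) := by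
      rw [div_eq_div_iff (by linarith) (by linarith)]
      ring
    rw [h2, ← one_div]
    apply div_le_div_of_nonneg_right _ (by linarith)
    · nlinarith [pow_nonneg (le_of_lt hr0) (j + 1 - i)]
  calc ∑ t ∈ Finset.Icc i j, Real.exp (-(b + m * t) ^ 2 / (2 * t * A ^ 2))
      ≤ ∑ t ∈ Finset.Icc i j, C * r ^ t := hsum
    _ = C * ∑ t ∈ Finset.Icc i j, r ^ t := by rw [Finset.mul_sum]
    _ ≤ C * (r ^ i * (1 - r)⁻¹) := by
        apply mul_le_mul_of_nonneg_left hgeom (le_of_lt hC0)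
    _ = ρ⁻¹ * (C * r ^ i) := by rw [hρ]; ring
    _ = ρ⁻¹ * Real.exp (-(b ^ 2) / (2 * j * A ^ 2) - b * m / A ^ 2 -
        m ^ 2 * i / (2 * A ^ 2)) := by
        congr 1
        rw [hC, hr, ← Real.exp_nat_mul, ← Real.exp_add]
        congr 1
        ring
end

section
/- Let A > 0, m > 0 and b > 0, set γ = b/m and ρ = 1 − exp(−m²/(2A²)). Then the head and tail of the series ∑_t exp(−(b + m t)²/(2 t A²)) satisfy: ∑_{t=1}^{⌊γ/2⌋} exp(−(b + m t)²/(2 t A²)) ≤ ρ⁻¹ · exp(−2 b m / A²), and ∑_{t=⌈2γ⌉}^{∞} exp(−(b + m t)²/(2 t A²)) ≤ ρ⁻¹ · exp(−2 b m / A²). -/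
/-!
Writing `q = exp (-m² / (2A²))`, the exponent splits as
`-(b + m t)² / (2 t A²) = -b m / A² - b² / (2 t A²) + t log q`.
On the head `2 m t ≤ b`, so `b² / (2 t) ≥ b m` and each term is at most `exp (-2bm/A²) q^t`.
On the tail we drop `b² / (2 t A²)`; since `m t₀ ≥ 2 b` at the first index `t₀`, the factor
`q^{t₀}` supplies the second `exp (-bm/A²)`. Both sums are then bounded by a geometric series.
-/

open Real Finset

section Geometric

variable {q : ℝ}

theorem sum_pow_le_inv_one_sub (h0 : 0 ≤ q) (h1 : q < 1) (s : Finset ℕ) :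
    ∑ t ∈ s, q ^ t ≤ (1 - q)⁻¹ :=
  tsum_geometric_of_lt_one h0 h1 ▸
    (summable_geometric_of_lt_one h0 h1).sum_le_tsum s fun _ _ => by positivity

theorem tsum_geometric_subtype_ge_le (h0 : 0 ≤ q) (h1 : q < 1) (N : ℕ) :
    ∑' t : {t : ℕ // N ≤ t}, q ^ (t : ℕ) ≤ q ^ N * (1 - q)⁻¹ := by
  have hinj : Function.Injective fun t : {t : ℕ // N ≤ t} => (t : ℕ) - N := by
    rintro ⟨s, hs⟩ ⟨t, ht⟩ (hst : s - N = t - N)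
    exact Subtype.ext (show s = t by omega)
  calc ∑' t : {t : ℕ // N ≤ t}, q ^ (t : ℕ)
      ≤ ∑' n : ℕ, q ^ N * q ^ n :=
        Summable.tsum_le_tsum_of_inj _ hinj (fun _ _ => by positivity)
          (fun t => by rw [← pow_add, Nat.add_sub_cancel' t.2])
          ((summable_geometric_of_lt_one h0 h1).subtype _)
          ((summable_geometric_of_lt_one h0 h1).mul_left _)
    _ = q ^ N * (1 - q)⁻¹ := by rw [tsum_mul_left, tsum_geometric_of_lt_one h0 h1]

end Geometric

section GaussianTerms

variable {A m b : ℝ}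

theorem exp_neg_sq_div_two_mul_sq_lt_one (hA : A ≠ 0) (hm : m ≠ 0) :
    exp (-(m ^ 2) / (2 * A ^ 2)) < 1 := by
  rw [exp_lt_one_iff, neg_div, neg_lt_zero]
  positivity

theorem neg_sq_add_div_eq {t : ℝ} (hA : A ≠ 0) (ht : t ≠ 0) :
    -(b + m * t) ^ 2 / (2 * t * A ^ 2) =
      -(b * m) / A ^ 2 - b ^ 2 / (2 * t * A ^ 2) + t * (-(m ^ 2) / (2 * A ^ 2)) := by
  field_simp
  ring

theorem exp_neg_sq_add_div_le_of_two_mul_le {t : ℕ} (hA : A ≠ 0) (ht : 0 < t)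
    (hb : 0 ≤ b) (hbt : 2 * m * t ≤ b) :
    exp (-(b + m * t) ^ 2 / (2 * t * A ^ 2)) ≤
      exp (-(2 * b * m) / A ^ 2) * exp (-(m ^ 2) / (2 * A ^ 2)) ^ t := by
  have ht' : (0 : ℝ) < t := Nat.cast_pos.mpr ht
  have hbm : b * m / A ^ 2 ≤ b ^ 2 / (2 * t * A ^ 2) := by
    rw [div_le_div_iff₀ (by positivity) (by positivity)]
    nlinarith [mul_le_mul_of_nonneg_left hbt hb, sq_nonneg A]
  rw [neg_sq_add_div_eq hA ht'.ne', ← exp_nat_mul, ← exp_add, exp_le_exp]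
  have : -(2 * b * m) / A ^ 2 = -(b * m) / A ^ 2 - b * m / A ^ 2 := by ring
  linarith

theorem exp_neg_sq_add_div_le {t : ℕ} (hA : A ≠ 0) (ht : 0 < t) :
    exp (-(b + m * t) ^ 2 / (2 * t * A ^ 2)) ≤
      exp (-(b * m) / A ^ 2) * exp (-(m ^ 2) / (2 * A ^ 2)) ^ t := by
  have ht' : (0 : ℝ) < t := Nat.cast_pos.mpr ht
  rw [neg_sq_add_div_eq hA ht'.ne', ← exp_nat_mul, ← exp_add, exp_le_exp]
  have : 0 ≤ b ^ 2 / (2 * t * A ^ 2) := by positivity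
  linarith

theorem exp_neg_sq_div_two_mul_sq_pow_le {N : ℕ} (hm : 0 ≤ m) (hN : 2 * b ≤ m * N) :
    exp (-(m ^ 2) / (2 * A ^ 2)) ^ N ≤ exp (-(b * m) / A ^ 2) := by
  rw [← exp_nat_mul, exp_le_exp,
    show N * (-(m ^ 2) / (2 * A ^ 2)) = -(m * N * m) / (2 * A ^ 2) by ring,
    show -(b * m) / A ^ 2 = -(2 * b * m) / (2 * A ^ 2) by ring]
  gcongr

theorem sum_Icc_exp_neg_sq_add_div_le (hA : A ≠ 0) (hm : 0 < m) :
    ∑ t ∈ Icc 1 ⌊b / m / 2⌋₊, exp (-(b + m * t) ^ 2 / (2 * t * A ^ 2)) ≤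
      (1 - exp (-(m ^ 2) / (2 * A ^ 2)))⁻¹ * exp (-(2 * b * m) / A ^ 2) := by
  set q := exp (-(m ^ 2) / (2 * A ^ 2))
  have hterm : ∀ t ∈ Icc 1 ⌊b / m / 2⌋₊,
      exp (-(b + m * t) ^ 2 / (2 * t * A ^ 2)) ≤ exp (-(2 * b * m) / A ^ 2) * q ^ t := by
    intro t ht
    obtain ⟨ht1, htγ⟩ := mem_Icc.mp ht
    rw [Nat.le_floor_iff' (by omega), le_div_iff₀ two_pos, le_div_iff₀ hm] at htγ
    have : (0 : ℝ) < t := by exact_mod_cast ht1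
    exact exp_neg_sq_add_div_le_of_two_mul_le hA ht1 (by nlinarith) (by linarith)
  calc _ ≤ ∑ t ∈ Icc 1 ⌊b / m / 2⌋₊, exp (-(2 * b * m) / A ^ 2) * q ^ t := sum_le_sum hterm
    _ = exp (-(2 * b * m) / A ^ 2) * ∑ t ∈ Icc 1 ⌊b / m / 2⌋₊, q ^ t := by rw [mul_sum]
    _ ≤ exp (-(2 * b * m) / A ^ 2) * (1 - q)⁻¹ := by
      gcongr
      exact sum_pow_le_inv_one_sub (exp_pos _).le (exp_neg_sq_div_two_mul_sq_lt_one hA hm.ne') _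
    _ = _ := mul_comm _ _

theorem tsum_exp_neg_sq_add_div_le (hA : A ≠ 0) (hm : 0 < m) (hb : 0 < b) :
    ∑' t : {t : ℕ // ⌈2 * (b / m)⌉₊ ≤ t}, exp (-(b + m * (t : ℕ)) ^ 2 / (2 * (t : ℕ) * A ^ 2)) ≤
      (1 - exp (-(m ^ 2) / (2 * A ^ 2)))⁻¹ * exp (-(2 * b * m) / A ^ 2) := by
  set q := exp (-(m ^ 2) / (2 * A ^ 2))
  set N := ⌈2 * (b / m)⌉₊
  have hq0 : 0 ≤ q := (exp_pos _).le
  have hq1 : q < 1 := exp_neg_sq_div_two_mul_sq_lt_one hA hm.ne'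
  have hN : 2 * b ≤ m * N := by
    have := mul_le_mul_of_nonneg_left (Nat.le_ceil (2 * (b / m))) hm.le
    rwa [mul_left_comm, mul_div_cancel₀ b hm.ne'] at this
  have hN0 : 0 < N := Nat.ceil_pos.mpr (by positivity)
  have hterm : ∀ t : {t : ℕ // N ≤ t}, exp (-(b + m * (t : ℕ)) ^ 2 / (2 * (t : ℕ) * A ^ 2)) ≤
      exp (-(b * m) / A ^ 2) * q ^ (t : ℕ) :=
    fun t => exp_neg_sq_add_div_le hA (hN0.trans_le t.2)
  have hgeom : Summable fun t : {t : ℕ // N ≤ t} => exp (-(b * m) / A ^ 2) * q ^ (t : ℕ) :=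
    ((summable_geometric_of_lt_one hq0 hq1).subtype _).mul_left _
  calc _ ≤ ∑' t : {t : ℕ // N ≤ t}, exp (-(b * m) / A ^ 2) * q ^ (t : ℕ) :=
        (hgeom.of_nonneg_of_le (fun _ => (exp_pos _).le) hterm).tsum_le_tsum hterm hgeom
    _ = exp (-(b * m) / A ^ 2) * ∑' t : {t : ℕ // N ≤ t}, q ^ (t : ℕ) := tsum_mul_left
    _ ≤ exp (-(b * m) / A ^ 2) * (q ^ N * (1 - q)⁻¹) := by
      gcongr
      exact tsum_geometric_subtype_ge_le hq0 hq1 N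
    _ ≤ exp (-(b * m) / A ^ 2) * (exp (-(b * m) / A ^ 2) * (1 - q)⁻¹) := by
      gcongr
      exact exp_neg_sq_div_two_mul_sq_pow_le hm.le hN
    _ = (1 - q)⁻¹ * exp (-(2 * b * m) / A ^ 2) := by
      rw [← mul_assoc, ← exp_add]
      ring_nf

end GaussianTerms

/-- For `A > 0`, `m > 0`, `b > 0`, with `γ = b/m` and
`ρ = 1 - exp (-m² / (2A²))`, the head and tail of the series
`∑_t exp (-(b + m t)² / (2 t A²))` satisfy:
the sum over `1 ≤ t ≤ ⌊γ/2⌋` is at most `ρ⁻¹ exp (-2bm/A²)`, and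
the sum over `t ≥ ⌈2γ⌉` is at most `ρ⁻¹ exp (-2bm/A²)`. -/
theorem head_tail_exp_quadratic_bound (A m b : ℝ) (hA : 0 < A) (hm : 0 < m) (hb : 0 < b)
    (γ : ℝ) (hγ : γ = b / m)
    (ρ : ℝ) (hρ : ρ = 1 - Real.exp (-(m ^ 2) / (2 * A ^ 2))) :
    (∑ t ∈ Finset.Icc 1 ⌊γ / 2⌋₊, Real.exp (-(b + m * t) ^ 2 / (2 * t * A ^ 2)) ≤
        ρ⁻¹ * Real.exp (-(2 * b * m) / A ^ 2)) ∧
      (∑' t : {t : ℕ // ⌈2 * γ⌉₊ ≤ t},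
          Real.exp (-(b + m * (t : ℕ)) ^ 2 / (2 * (t : ℕ) * A ^ 2)) ≤
        ρ⁻¹ * Real.exp (-(2 * b * m) / A ^ 2)) := by
  subst hγ hρ
  exact ⟨sum_Icc_exp_neg_sq_add_div_le hA.ne' hm, tsum_exp_neg_sq_add_div_le hA.ne' hm hb⟩
end

section
/- Let A > 0 and let X₁, X₂, … be i.i.d. real-valued random variables with |X₁| ≤ A almost surely and mean μ := E[X₁] > 0; set S₀ = 0 and S_t = X₁ + … + X_t. Then for every b > 0, every c ∈ (0,1) and every positive integer k, writing m = (1−c)μ and ρ = 1 − exp(−m²/(2A²)), one has ∑_{t=0}^{∞} P(S_t ≤ b − m t) ≤ 1 + b/m + b/(2(k+1)m) + (k+1) ρ⁻¹. -/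
open MeasureTheory ProbabilityTheory Real Finset

set_option maxHeartbeats 1000000 in
/-- let `X₁, X₂, …` be i.i.d. real random variables with `|X₁| ≤ A`
a.s. and mean `μ = E[X₁] > 0`, and `S_t` the partial sums. Then for every `b > 0`,
`c ∈ (0,1)` and positive integer `k`, with `m = (1−c)μ` and
`ρ = 1 − exp (−m²/(2A²))`:
`∑_{t=0}^{∞} P(S_t ≤ b − m t) ≤ 1 + b/m + b/(2(k+1)m) + (k+1) ρ⁻¹`. -/
theorem partial_sum_crossing_bound
    {Ω : Type*} [MeasurableSpace Ω] (P : Measure Ω) [IsProbabilityMeasure P]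
    (A : ℝ) (hA : 0 < A)
    (X : ℕ → Ω → ℝ) (hmeas : ∀ i, Measurable (X i))
    (hindep : iIndepFun X P)
    (hident : ∀ i, IdentDistrib (X i) (X 0) P P)
    (hbdd : ∀ i, ∀ᵐ ω ∂P, |X i ω| ≤ A)
    (μ : ℝ) (hμdef : μ = ∫ ω, X 0 ω ∂P) (hμpos : 0 < μ)
    (b c : ℝ) (hb : 0 < b) (hc : c ∈ Set.Ioo (0 : ℝ) 1) (k : ℕ) (hk : 1 ≤ k)
    (m ρ : ℝ) (hm : m = (1 - c) * μ)
    (hρ : ρ = 1 - Real.exp (-(m ^ 2) / (2 * A ^ 2))) :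
    ∑' t : ℕ, P {ω | ∑ i ∈ Finset.range t, X i ω ≤ b - m * t} ≤
      ENNReal.ofReal (1 + b / m + b / (2 * (k + 1) * m) + (k + 1) * ρ⁻¹) := by
  obtain ⟨hc0, hc1⟩ := hc
  -- basic facts
  have hXint : Integrable (X 0) P := by
    refine (integrable_const A).mono' (hmeas 0).aestronglyMeasurable ?_
    filter_upwards [hbdd 0] with ω h using by simpa using h
  have hμA : μ ≤ A := by
    rw [hμdef]
    calc ∫ ω, X 0 ω ∂P ≤ ∫ _ω, A ∂P := by
          refine integral_mono_ae hXint (integrable_const A) ?_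
          filter_upwards [hbdd 0] with ω h using le_of_abs_le h
      _ = A := by simp
  have hm0 : 0 < m := by rw [hm]; nlinarith
  have hmμ : m ≤ μ := by rw [hm]; nlinarith
  have hmA : m < A := by rw [hm]; nlinarith
  set r : ℝ := Real.exp (-(m ^ 2) / (2 * A ^ 2)) with hr
  have hr0 : 0 < r := Real.exp_pos _
  have hr1 : r < 1 := by
    rw [hr, Real.exp_lt_one_iff]
    have h1 : 0 < m ^ 2 := by positivity
    have h2 : 0 < 2 * A ^ 2 := by positivity
    exact div_neg_of_neg_of_pos (by linarith) h2
  have hρ0 : 0 < ρ := by rw [hρ]; linarith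
  -- the tilt parameter
  have hAm : 0 < A - m := by linarith
  have hAm' : 0 < A + m := by linarith
  set q : ℝ := Real.sqrt ((A - m) / (A + m)) with hq
  have hq0 : 0 < q := Real.sqrt_pos.2 (div_pos hAm hAm')
  have hq1 : q < 1 := by
    have h1 : (A - m) / (A + m) < 1 := (div_lt_one hAm').2 (by linarith)
    calc q < Real.sqrt 1 := Real.sqrt_lt_sqrt (le_of_lt (div_pos hAm hAm')) h1
      _ = 1 := Real.sqrt_one
  set L : ℝ := Real.log q / A with hL
  have hL0 : L < 0 := div_neg_of_neg_of_pos (Real.log_neg hq0 hq1) hA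
  have heLA : Real.exp (L * A) = q := by
    rw [hL, div_mul_cancel₀ _ (ne_of_gt hA), Real.exp_log hq0]
  have heLA' : Real.exp (-(L * A)) = q⁻¹ := by rw [Real.exp_neg, heLA]
  -- pointwise convexity bound
  have hconv : ∀ x : ℝ, |x| ≤ A →
      Real.exp (L * x) ≤ (q⁻¹ + q) / 2 + (q - q⁻¹) / (2 * A) * x := by
    intro x hx
    rw [abs_le] at hx
    have h1 : (0:ℝ) ≤ (A - x) / (2 * A) := by
      apply div_nonneg <;> linarith
    have h2 : (0:ℝ) ≤ (A + x) / (2 * A) := by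
      apply div_nonneg <;> linarith
    have h3 : (A - x) / (2 * A) + (A + x) / (2 * A) = 1 := by
      field_simp
      ring
    have hcx := convexOn_exp.2 (Set.mem_univ (L * (-A))) (Set.mem_univ (L * A)) h1 h2 h3
    rw [smul_eq_mul, smul_eq_mul] at hcx
    have harg : (A - x) / (2 * A) * (L * (-A)) + (A + x) / (2 * A) * (L * A) = L * x := by
      field_simp
      ring
    rw [harg] at hcx
    have heq : L * (-A) = -(L * A) := by ring
    rw [heq, heLA', heLA] at hcx
    calc Real.exp (L * x) ≤ (A - x) / (2 * A) * q⁻¹ + (A + x) / (2 * A) * q := hcx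
      _ = (q⁻¹ + q) / 2 + (q - q⁻¹) / (2 * A) * x := by field_simp; ring
  -- integrability of exp (L * X i)
  have hint : ∀ i, Integrable (fun ω => Real.exp (L * X i ω)) P := by
    intro i
    refine (integrable_const (Real.exp (|L| * A))).mono'
      (((hmeas i).const_mul L).exp.aestronglyMeasurable) ?_
    filter_upwards [hbdd i] with ω h
    rw [Real.norm_eq_abs, Real.abs_exp]
    apply Real.exp_le_exp.2
    calc L * X i ω ≤ |L * X i ω| := le_abs_self _
      _ = |L| * |X i ω| := abs_mul _ _
      _ ≤ |L| * A := by
          exact mul_le_mul_of_nonneg_left h (abs_nonneg _)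
  -- the mgf bound
  set M : ℝ := mgf (X 0) P L with hM
  have hM0 : 0 ≤ M := mgf_nonneg
  set s : ℝ := Real.sqrt ((A - m) * (A + m)) with hs
  have hq2 : q ^ 2 = (A - m) / (A + m) := Real.sq_sqrt (le_of_lt (div_pos hAm hAm'))
  have hs1 : (A - m) * q⁻¹ = s := by
    have h1 : ((A - m) * q⁻¹) ^ 2 = (A - m) * (A + m) := by
      rw [mul_pow, inv_pow, hq2]
      field_simp
    rw [hs, ← h1, Real.sqrt_sq (by positivity)]
  have hs2 : (A + m) * q = s := by
    have h1 : ((A + m) * q) ^ 2 = (A - m) * (A + m) := by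
      rw [mul_pow, hq2]
      field_simp
    rw [hs, ← h1, Real.sqrt_sq (by positivity)]
  have hsr : s / A ≤ r := by
    rw [div_le_iff₀ hA]
    have hrsq : r ^ 2 = Real.exp (-(m ^ 2) / A ^ 2) := by
      rw [hr, sq, ← Real.exp_add]
      congr 1
      field_simp
      ring
    have hexp : -(m ^ 2) / A ^ 2 + 1 ≤ Real.exp (-(m ^ 2) / A ^ 2) :=
      Real.add_one_le_exp _
    have h2 : (A - m) * (A + m) ≤ (r * A) ^ 2 := by
      have hA2 : (0:ℝ) < A ^ 2 := by positivity
      have : (A ^ 2 - m ^ 2) / A ^ 2 ≤ r ^ 2 := by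
        rw [hrsq]
        calc (A ^ 2 - m ^ 2) / A ^ 2 = -(m ^ 2) / A ^ 2 + 1 := by field_simp; ring
          _ ≤ _ := hexp
      calc (A - m) * (A + m) = (A ^ 2 - m ^ 2) / A ^ 2 * A ^ 2 := by field_simp; ring
        _ ≤ r ^ 2 * A ^ 2 := by gcongr
        _ = (r * A) ^ 2 := by ring
    calc s = Real.sqrt ((A - m) * (A + m)) := hs
      _ ≤ Real.sqrt ((r * A) ^ 2) := Real.sqrt_le_sqrt h2
      _ = r * A := Real.sqrt_sq (by positivity)
  have hMr : M ≤ r := by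
    have hintRHS : Integrable (fun ω => (q⁻¹ + q) / 2 + (q - q⁻¹) / (2 * A) * X 0 ω) P :=
      (integrable_const _).add (hXint.const_mul _)
    have h1 : M ≤ (q⁻¹ + q) / 2 + (q - q⁻¹) / (2 * A) * μ := by
      have hmono : M ≤ ∫ ω, ((q⁻¹ + q) / 2 + (q - q⁻¹) / (2 * A) * X 0 ω) ∂P := by
        rw [hM, mgf]
        refine integral_mono_ae (hint 0) hintRHS ?_
        filter_upwards [hbdd 0] with ω h using hconv (X 0 ω) h
      have heq : ∫ ω, ((q⁻¹ + q) / 2 + (q - q⁻¹) / (2 * A) * X 0 ω) ∂P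
          = (q⁻¹ + q) / 2 + (q - q⁻¹) / (2 * A) * μ := by
        rw [integral_add (integrable_const _) (hXint.const_mul _),
          integral_const_mul, ← hμdef]
        simp
      rwa [heq] at hmono
    have h2 : (q - q⁻¹) / (2 * A) * μ ≤ (q - q⁻¹) / (2 * A) * m := by
      have hc2 : (q - q⁻¹) / (2 * A) ≤ 0 := by
        apply div_nonpos_of_nonpos_of_nonneg
        · have : 1 < q⁻¹ := (one_lt_inv_iff₀).2 ⟨hq0, hq1⟩
          linarith
        · linarith
      exact mul_le_mul_of_nonpos_left hmμ hc2
    have h3 : (q⁻¹ + q) / 2 + (q - q⁻¹) / (2 * A) * m = s / A := by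
      calc (q⁻¹ + q) / 2 + (q - q⁻¹) / (2 * A) * m
          = ((A - m) * q⁻¹ + (A + m) * q) / (2 * A) := by
            field_simp
            ring
        _ = (s + s) / (2 * A) := by rw [hs1, hs2]
        _ = s / A := by field_simp; ring
    calc M ≤ (q⁻¹ + q) / 2 + (q - q⁻¹) / (2 * A) * μ := h1
      _ ≤ (q⁻¹ + q) / 2 + (q - q⁻¹) / (2 * A) * m := by linarith
      _ = s / A := h3
      _ ≤ r := hsr
  -- identical distribution: all mgfs equal
  have hmgf_eq : ∀ i, mgf (X i) P L = M := by
    intro i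
    rw [hM]
    have := ((hident i).comp (u := fun x => Real.exp (L * x))
      (measurable_exp.comp (measurable_id.const_mul L))).integral_eq
    simpa [mgf, Function.comp] using this
  -- Chernoff bound for large t
  have hchern : ∀ t : ℕ, b ≤ m * t →
      P {ω | ∑ i ∈ Finset.range t, X i ω ≤ b - m * t} ≤ ENNReal.ofReal (r ^ t) := by
    intro t ht
    have hintS : Integrable (fun ω => Real.exp (L * (∑ i ∈ Finset.range t, X i) ω)) P :=
      hindep.integrable_exp_mul_sum hmeas (fun i _ => hint i)
    have hcher := measure_le_le_exp_mul_mgf (μ := P) (X := ∑ i ∈ Finset.range t, X i)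
      (b - m * t) hL0.le hintS
    rw [hindep.mgf_sum hmeas] at hcher
    have hprod : ∏ i ∈ Finset.range t, mgf (X i) P L = M ^ t := by
      rw [Finset.prod_congr rfl (fun i _ => hmgf_eq i), Finset.prod_const, Finset.card_range]
    rw [hprod] at hcher
    have hset : {ω | ∑ i ∈ Finset.range t, X i ω ≤ b - m * t}
        = {ω | (∑ i ∈ Finset.range t, X i) ω ≤ b - m * t} := by
      simp only [Finset.sum_apply]
    rw [hset]
    have hbound : Real.exp (-L * (b - m * t)) * M ^ t ≤ r ^ t := by
      have h1 : Real.exp (-L * (b - m * t)) ≤ 1 := by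
        rw [Real.exp_le_one_iff]
        have h2 : b - m * t ≤ 0 := by linarith
        exact mul_nonpos_iff.2 (Or.inl ⟨neg_nonneg.2 hL0.le, h2⟩)
      calc Real.exp (-L * (b - m * t)) * M ^ t ≤ 1 * M ^ t := by
            exact mul_le_mul_of_nonneg_right h1 (pow_nonneg hM0 t)
        _ = M ^ t := one_mul _
        _ ≤ r ^ t := pow_le_pow_left₀ hM0 hMr t
    exact (ENNReal.le_ofReal_iff_toReal_le (measure_ne_top P _) (pow_nonneg hr0.le t)).2
      (hcher.trans hbound)
  -- split the sum
  set N : ℕ := ⌈b / m⌉₊ with hN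
  have hNb : ∀ t : ℕ, N ≤ t → b ≤ m * t := by
    intro t ht
    have h1 : b / m ≤ (N : ℝ) := Nat.le_ceil _
    have h2 : (N : ℝ) ≤ t := Nat.cast_le.2 ht
    rw [div_le_iff₀ hm0] at h1
    nlinarith
  set g : ℕ → ENNReal := fun t => (if t < N then 1 else 0) + ENNReal.ofReal (r ^ t) with hg
  have hfg : ∀ t : ℕ, P {ω | ∑ i ∈ Finset.range t, X i ω ≤ b - m * t} ≤ g t := by
    intro t
    simp only [hg]
    by_cases h : t < N
    · rw [if_pos h]
      exact le_trans prob_le_one le_self_add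
    · rw [if_neg h, zero_add]
      exact hchern t (hNb t (le_of_not_gt h))
  have hsumN : ∑' t : ℕ, (if t < N then (1 : ENNReal) else 0) = (N : ENNReal) := by
    rw [tsum_eq_sum (s := Finset.range N)
      (fun t ht => if_neg (fun h => ht (Finset.mem_range.2 h)))]
    rw [Finset.sum_congr rfl (fun t ht => if_pos (Finset.mem_range.1 ht)),
      Finset.sum_const, Finset.card_range, nsmul_eq_mul, mul_one]
  have hsumr : ∑' t : ℕ, ENNReal.ofReal (r ^ t) = ENNReal.ofReal ρ⁻¹ := by
    have h1 : ∀ t : ℕ, ENNReal.ofReal (r ^ t) = (ENNReal.ofReal r) ^ t := by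
      intro t
      exact ENNReal.ofReal_pow hr0.le t
    calc ∑' t : ℕ, ENNReal.ofReal (r ^ t) = ∑' t : ℕ, (ENNReal.ofReal r) ^ t := by
          exact tsum_congr h1
      _ = (1 - ENNReal.ofReal r)⁻¹ := ENNReal.tsum_geometric _
      _ = ENNReal.ofReal ρ⁻¹ := by
          rw [hρ, ENNReal.ofReal_inv_of_pos (by linarith),
            ENNReal.ofReal_sub _ hr0.le, ENNReal.ofReal_one]
  calc ∑' t : ℕ, P {ω | ∑ i ∈ Finset.range t, X i ω ≤ b - m * t}
      ≤ ∑' t : ℕ, g t := ENNReal.tsum_le_tsum hfg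
    _ = (N : ENNReal) + ENNReal.ofReal ρ⁻¹ := by
        simp only [hg]
        rw [ENNReal.tsum_add, hsumN, hsumr]
    _ ≤ ENNReal.ofReal (1 + b / m + b / (2 * (k + 1) * m) + (k + 1) * ρ⁻¹) := by
        rw [← ENNReal.ofReal_natCast N, ← ENNReal.ofReal_add (Nat.cast_nonneg N)
          (inv_nonneg.2 hρ0.le)]
        apply ENNReal.ofReal_le_ofReal
        have hN1 : (N : ℝ) ≤ b / m + 1 := by
          rw [hN]
          exact le_of_lt (Nat.ceil_lt_add_one (le_of_lt (div_pos hb hm0)))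
        have hρinv : 0 ≤ ρ⁻¹ := inv_nonneg.2 hρ0.le
        have hkρ : ρ⁻¹ ≤ (k + 1) * ρ⁻¹ := by
          nlinarith [Nat.cast_nonneg (α := ℝ) k]
        have hbk : 0 ≤ b / (2 * (k + 1) * m) := by positivity
        linarith
end

section
/- Error probabilities of Wald's SPRT under the no-overshoot condition: assume the no-overshoot condition holds. Then the Type I error equals P₀(ℓ_T = b) = (1 − e^{−a}) / (e^{b} − e^{−a}), and the Type II error equals P₁(ℓ_T = −a) = e^{−a} (e^{b} − 1) / (e^{b} − e^{−a}). -/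
open scoped ENNReal
open MeasureTheory ProbabilityTheory Real Finset


theorem my_lintegral_pi_prod {α : Type*} [MeasurableSpace α] (μ : Measure α) [SigmaFinite μ]
    (n : ℕ) (f : Fin n → α → ℝ≥0∞) (hf : ∀ i, Measurable (f i)) :
    ∫⁻ y : (Fin n → α), ∏ i, f i (y i) ∂(Measure.pi fun _ => μ) = ∏ i, ∫⁻ z, f i z ∂μ := by
  induction n with
  | zero => simp
  | succ n ih =>
    rw [← ((measurePreserving_piFinSuccAbove (fun _ : Fin (n+1) => μ) 0).symm).lintegral_comp_emb
      (MeasurableEquiv.measurableEmbedding _) (fun y => ∏ i, f i (y i))]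
    simp_rw [MeasurableEquiv.piFinSuccAbove_symm_apply, Fin.insertNthEquiv,
      Fin.prod_univ_succ, Fin.insertNth_zero]
    simp only [Fin.zero_succAbove, Fin.cons_zero, Fin.cons_succ, Equiv.coe_fn_mk, cast_eq]
    have hg : Measurable fun v : Fin n → α => ∏ x : Fin n, f x.succ (v x) :=
      Finset.measurable_prod Finset.univ fun (i : Fin n) _ =>
        (hf i.succ).comp (measurable_pi_apply i)
    rw [lintegral_prod_mul (hf 0).aemeasurable hg.aemeasurable]
    rw [ih _ (fun i => hf i.succ)]

theorem my_map_pi_of_iIndep {𝒳 Ω : Type*} [MeasurableSpace 𝒳] [MeasurableSpace Ω]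
    (P : Measure Ω) [IsProbabilityMeasure P] (x : ℕ → Ω → 𝒳) (hxm : ∀ i, Measurable (x i))
    (μ : Measure 𝒳) [IsProbabilityMeasure μ] (hx : ∀ i, Measure.map (x i) P = μ)
    (hindep : iIndepFun x P) (n : ℕ) :
    Measure.map (fun ω (i : Fin n) => x i ω) P = Measure.pi (fun _ => μ) := by
  classical
  refine (Measure.pi_eq fun s hs => ?_).symm
  have hX : Measurable (fun ω (i : Fin n) => x i ω) := measurable_pi_lambda _ fun i => hxm i
  rw [Measure.map_apply hX (MeasurableSet.univ_pi hs)]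
  set sets : ℕ → Set 𝒳 := fun i => if h : i < n then s ⟨i, h⟩ else Set.univ with hsets
  have hpre : (fun ω (i : Fin n) => x i ω) ⁻¹' Set.pi Set.univ s
      = ⋂ i ∈ Finset.range n, x i ⁻¹' sets i := by
    ext ω
    simp only [Set.mem_preimage, Set.mem_pi, Set.mem_univ, forall_true_left, Set.mem_iInter,
      Finset.mem_range, sets]
    constructor
    · intro h i hi
      rw [dif_pos hi]
      exact h ⟨i, hi⟩
    · intro h i
      have := h i.val i.isLt
      rwa [dif_pos i.isLt, Fin.eta] at this
  rw [hpre, hindep.measure_inter_preimage_eq_mul (Finset.range n)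
    (fun i hi => by
      by_cases h : i < n
      · simpa [sets, dif_pos h] using hs ⟨i, h⟩
      · simp [sets, dif_neg h])]
  have hPx : ∀ i, P (x i ⁻¹' sets i) = μ (sets i) := by
    intro i
    rw [← hx i, Measure.map_apply (hxm i)]
    by_cases h : i < n
    · simpa [sets, dif_pos h] using hs ⟨i, h⟩
    · simp [sets, dif_neg h]
  simp_rw [hPx]
  rw [← Fin.prod_univ_eq_prod_range (fun i => μ (sets i)) n]
  exact Finset.prod_congr rfl fun i _ => by simp [sets, dif_pos i.isLt]

theorem my_pi_withDensity {𝒳 : Type*} [MeasurableSpace 𝒳] (ν : Measure 𝒳) [SigmaFinite ν]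
    (g : 𝒳 → ℝ≥0∞) (hg : Measurable g) [SigmaFinite (ν.withDensity g)] (n : ℕ) :
    Measure.pi (fun _ : Fin n => ν.withDensity g)
      = (Measure.pi fun _ : Fin n => ν).withDensity (fun y => ∏ i, g (y i)) := by
  refine Measure.pi_eq fun s hs => ?_
  rw [withDensity_apply _ (MeasurableSet.univ_pi hs)]
  rw [← lintegral_indicator (MeasurableSet.univ_pi hs)]
  have hind : ∀ y : Fin n → 𝒳, (Set.pi Set.univ s).indicator (fun y => ∏ i, g (y i)) y
      = ∏ i, (s i).indicator g (y i) := by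
    intro y
    by_cases hy : y ∈ Set.pi Set.univ s
    · rw [Set.indicator_of_mem hy]
      exact Finset.prod_congr rfl fun i _ => (Set.indicator_of_mem (hy i trivial) g).symm
    · rw [Set.indicator_of_notMem hy]
      rw [Set.mem_pi] at hy
      push_neg at hy
      obtain ⟨i, _, hi⟩ := hy
      exact (Finset.prod_eq_zero (Finset.mem_univ i) (Set.indicator_of_notMem hi g)).symm
  simp_rw [hind]
  rw [my_lintegral_pi_prod ν n _ (fun i => hg.indicator (hs i))]
  exact Finset.prod_congr rfl fun i _ => by
    rw [lintegral_indicator (hs i), withDensity_apply _ (hs i)]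

theorem my_change_of_measure {𝒳 Ω : Type*} [MeasurableSpace 𝒳] [MeasurableSpace Ω]
    (ν : Measure 𝒳) [SigmaFinite ν]
    (f₀ f₁ : 𝒳 → ℝ) (hf₀ : ∀ y, 0 < f₀ y) (hf₁ : ∀ y, 0 < f₁ y)
    (hf₀m : Measurable f₀) (hf₁m : Measurable f₁)
    (hf₀p : IsProbabilityMeasure (ν.withDensity fun y => ENNReal.ofReal (f₀ y)))
    (hf₁p : IsProbabilityMeasure (ν.withDensity fun y => ENNReal.ofReal (f₁ y)))
    (P₀ P₁ : Measure Ω) [IsProbabilityMeasure P₀] [IsProbabilityMeasure P₁]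
    (x : ℕ → Ω → 𝒳) (hxm : ∀ i, Measurable (x i))
    (hx₀ : ∀ i, Measure.map (x i) P₀ = ν.withDensity fun y => ENNReal.ofReal (f₀ y))
    (hx₁ : ∀ i, Measure.map (x i) P₁ = ν.withDensity fun y => ENNReal.ofReal (f₁ y))
    (hindep₀ : iIndepFun x P₀)
    (hindep₁ : iIndepFun x P₁)
    (n : ℕ) (S : Set (Fin n → 𝒳)) (hS : MeasurableSet S) (c : ℝ)
    (hc : ∀ y ∈ S, (∑ i : Fin n, Real.log (f₁ (y i) / f₀ (y i))) = c) :
    P₁ ((fun ω (i : Fin n) => x i ω) ⁻¹' S)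
      = ENNReal.ofReal (Real.exp c) * P₀ ((fun ω (i : Fin n) => x i ω) ⁻¹' S) := by
  haveI := hf₀p; haveI := hf₁p
  have hX : Measurable fun ω (i : Fin n) => x i ω := measurable_pi_lambda _ fun i => hxm i
  have h₁ : P₁ ((fun ω (i : Fin n) => x i ω) ⁻¹' S)
      = ∫⁻ y in S, ∏ i, ENNReal.ofReal (f₁ (y i)) ∂(Measure.pi fun _ : Fin n => ν) := by
    rw [← Measure.map_apply hX hS, my_map_pi_of_iIndep P₁ x hxm _ hx₁ hindep₁ n,
      my_pi_withDensity ν _ hf₁m.ennreal_ofReal n, withDensity_apply _ hS]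
  have h₀ : P₀ ((fun ω (i : Fin n) => x i ω) ⁻¹' S)
      = ∫⁻ y in S, ∏ i, ENNReal.ofReal (f₀ (y i)) ∂(Measure.pi fun _ : Fin n => ν) := by
    rw [← Measure.map_apply hX hS, my_map_pi_of_iIndep P₀ x hxm _ hx₀ hindep₀ n,
      my_pi_withDensity ν _ hf₀m.ennreal_ofReal n, withDensity_apply _ hS]
  rw [h₁, h₀]
  have hpt : ∀ y ∈ S, (∏ i, ENNReal.ofReal (f₁ (y i)))
      = ENNReal.ofReal (Real.exp c) * ∏ i, ENNReal.ofReal (f₀ (y i)) := by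
    intro y hy
    have hec : Real.exp c = ∏ i, (f₁ (y i) / f₀ (y i)) := by
      rw [← hc y hy, Real.exp_sum]
      exact Finset.prod_congr rfl fun i _ => Real.exp_log (div_pos (hf₁ _) (hf₀ _))
    have hprod : (∏ i, f₁ (y i)) = Real.exp c * ∏ i, f₀ (y i) := by
      rw [hec, ← Finset.prod_mul_distrib]
      exact Finset.prod_congr rfl fun i _ => (div_mul_cancel₀ _ (hf₀ _).ne').symm
    rw [← ENNReal.ofReal_prod_of_nonneg (fun i _ => (hf₁ _).le), hprod,
      ENNReal.ofReal_mul (Real.exp_nonneg c),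
      ENNReal.ofReal_prod_of_nonneg (fun i _ => (hf₀ _).le)]
  have hm : Measurable fun y : Fin n → 𝒳 => ∏ i, ENNReal.ofReal (f₀ (y i)) :=
    Finset.measurable_prod Finset.univ fun (i : Fin n) _ =>
      hf₀m.ennreal_ofReal.comp (measurable_pi_apply i)
  rw [setLIntegral_congr_fun hS hpt, lintegral_const_mul _ hm]

/-- error probabilities of Wald's SPRT under the no-overshoot
condition: with i.i.d. observations having strictly positive densities `f₀`
(under `P₀`) and `f₁` (under `P₁`) w.r.t. a σ-finite reference measure, the
log-likelihood ratio process `ℓ_t = ∑_{i<t} log (f₁ xᵢ / f₀ xᵢ)`, the SPRT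
stopping time `T = inf {t ≥ 1 : ℓ_t ∉ (−a, b)}`, and the no-overshoot condition
(`T < ∞` a.s. and `ℓ_T ∈ {−a, b}` a.s. under both measures), one has
`P₀(ℓ_T = b) = (1 − e^{−a})/(e^b − e^{−a})` and
`P₁(ℓ_T = −a) = e^{−a}(e^b − 1)/(e^b − e^{−a})`. -/
theorem sprt_error_rates_no_overshoot
    {𝒳 Ω : Type*} [MeasurableSpace 𝒳] [MeasurableSpace Ω]
    (ν : Measure 𝒳) [SigmaFinite ν]
    (f₀ f₁ : 𝒳 → ℝ) (hf₀ : ∀ y, 0 < f₀ y) (hf₁ : ∀ y, 0 < f₁ y)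
    (hf₀m : Measurable f₀) (hf₁m : Measurable f₁)
    (hf₀p : IsProbabilityMeasure (ν.withDensity fun y => ENNReal.ofReal (f₀ y)))
    (hf₁p : IsProbabilityMeasure (ν.withDensity fun y => ENNReal.ofReal (f₁ y)))
    (P₀ P₁ : Measure Ω) [IsProbabilityMeasure P₀] [IsProbabilityMeasure P₁]
    (x : ℕ → Ω → 𝒳) (hxm : ∀ i, Measurable (x i))
    -- under `P₀` (resp. `P₁`) the observations are i.i.d. with density `f₀` (resp. `f₁`)
    (hx₀ : ∀ i, Measure.map (x i) P₀ = ν.withDensity fun y => ENNReal.ofReal (f₀ y))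
    (hx₁ : ∀ i, Measure.map (x i) P₁ = ν.withDensity fun y => ENNReal.ofReal (f₁ y))
    (hindep₀ : iIndepFun x P₀)
    (hindep₁ : iIndepFun x P₁)
    -- log-likelihood ratio process and SPRT stopping time
    (a b : ℝ) (ha : 0 < a) (hb : 0 < b)
    (ℓ : ℕ → Ω → ℝ)
    (hℓ : ∀ t ω, ℓ t ω = ∑ i ∈ Finset.range t, Real.log (f₁ (x i ω) / f₀ (x i ω)))
    (T : Ω → ℕ)
    (hT : ∀ ω, T ω = sInf {t : ℕ | 1 ≤ t ∧ ℓ t ω ∉ Set.Ioo (-a) b})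
    -- no-overshoot condition under both measures
    (hno₀ : ∀ᵐ ω ∂P₀, {t : ℕ | 1 ≤ t ∧ ℓ t ω ∉ Set.Ioo (-a) b}.Nonempty ∧
      (ℓ (T ω) ω = -a ∨ ℓ (T ω) ω = b))
    (hno₁ : ∀ᵐ ω ∂P₁, {t : ℕ | 1 ≤ t ∧ ℓ t ω ∉ Set.Ioo (-a) b}.Nonempty ∧
      (ℓ (T ω) ω = -a ∨ ℓ (T ω) ω = b)) :
    P₀ {ω | ℓ (T ω) ω = b} =
        ENNReal.ofReal ((1 - Real.exp (-a)) / (Real.exp b - Real.exp (-a))) ∧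
      P₁ {ω | ℓ (T ω) ω = -a} =
        ENNReal.ofReal (Real.exp (-a) * (Real.exp b - 1) /
          (Real.exp b - Real.exp (-a))) := by
  classical
  haveI := hf₀p; haveI := hf₁p
  -- characterization of the stopping time
  have hTchar : ∀ (ω : Ω) (t : ℕ), 1 ≤ t →
      (T ω = t ↔ ((∀ s, 1 ≤ s → s < t → ℓ s ω ∈ Set.Ioo (-a) b) ∧
        ℓ t ω ∉ Set.Ioo (-a) b)) := by
    intro ω t ht
    rw [hT ω]
    constructor
    · intro h
      have hne : {s : ℕ | 1 ≤ s ∧ ℓ s ω ∉ Set.Ioo (-a) b}.Nonempty := by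
        by_contra hemp
        rw [Set.not_nonempty_iff_eq_empty] at hemp
        rw [hemp, Nat.sInf_empty] at h
        omega
      have hmem := Nat.sInf_mem hne
      rw [h] at hmem
      refine ⟨fun s hs1 hst => ?_, hmem.2⟩
      by_contra hcon
      have hsle := Nat.sInf_le
        (show s ∈ {s : ℕ | 1 ≤ s ∧ ℓ s ω ∉ Set.Ioo (-a) b} from ⟨hs1, hcon⟩)
      rw [h] at hsle
      omega
    · rintro ⟨h1, h2⟩
      have htm : t ∈ {s : ℕ | 1 ≤ s ∧ ℓ s ω ∉ Set.Ioo (-a) b} := ⟨ht, h2⟩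
      refine le_antisymm (Nat.sInf_le htm) ?_
      by_contra hlt
      push_neg at hlt
      have hmem := Nat.sInf_mem (⟨t, htm⟩ :
        {s : ℕ | 1 ≤ s ∧ ℓ s ω ∉ Set.Ioo (-a) b}.Nonempty)
      exact hmem.2 (h1 _ hmem.1 hlt)
  set E : ℕ → ℝ → Set Ω := fun t c => {ω | T ω = t ∧ ℓ t ω = c} with hE
  have hℓ0 : ∀ ω : Ω, ℓ 0 ω = 0 := fun ω => by simp [hℓ]
  -- the key change-of-measure identity on each slice {T = t}
  have key : ∀ (t : ℕ), 1 ≤ t → ∀ c : ℝ, c ∉ Set.Ioo (-a) b →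
      MeasurableSet (E t c) ∧ P₁ (E t c) = ENNReal.ofReal (Real.exp c) * P₀ (E t c) := by
    intro t ht c hc
    set pad : (Fin t → 𝒳) → ℕ → 𝒳 :=
      fun y i => if h : i < t then y ⟨i, h⟩ else y ⟨0, ht⟩ with hpad
    set Λ : ℕ → (Fin t → 𝒳) → ℝ :=
      fun s y => ∑ i ∈ Finset.range s, Real.log (f₁ (pad y i) / f₀ (pad y i)) with hΛ
    have hrm : Measurable fun z : 𝒳 => Real.log (f₁ z / f₀ z) := (hf₁m.div hf₀m).log
    have hΛm : ∀ s, Measurable (Λ s) := by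
      intro s
      rw [hΛ]
      apply Finset.measurable_sum
      intro i _
      apply hrm.comp
      rw [hpad]
      by_cases h : i < t
      · simp only [dif_pos h]; exact measurable_pi_apply _
      · simp only [dif_neg h]; exact measurable_pi_apply _
    set S : Set (Fin t → 𝒳) :=
      {y | (∀ s, 1 ≤ s → s < t → Λ s y ∈ Set.Ioo (-a) b) ∧ Λ t y = c} with hSdef
    have hSm : MeasurableSet S := by
      have h1 : MeasurableSet {y : Fin t → 𝒳 | ∀ s, 1 ≤ s → s < t → Λ s y ∈ Set.Ioo (-a) b} := by
        have heq : {y : Fin t → 𝒳 | ∀ s, 1 ≤ s → s < t → Λ s y ∈ Set.Ioo (-a) b}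
            = ⋂ s, ⋂ (_ : 1 ≤ s), ⋂ (_ : s < t), Λ s ⁻¹' Set.Ioo (-a) b := by
          ext y; simp
        rw [heq]
        exact MeasurableSet.iInter fun s => MeasurableSet.iInter fun _ =>
          MeasurableSet.iInter fun _ => (hΛm s) measurableSet_Ioo
      exact h1.inter ((hΛm t) (measurableSet_singleton c))
    have hΛX : ∀ (ω : Ω) (s : ℕ), s ≤ t → Λ s (fun i : Fin t => x i ω) = ℓ s ω := by
      intro ω s hs
      rw [hℓ s ω, hΛ]
      refine Finset.sum_congr rfl fun i hi => ?_
      have hit : i < t := lt_of_lt_of_le (Finset.mem_range.mp hi) hs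
      simp only [hpad, dif_pos hit]
    have hES : E t c = (fun ω (i : Fin t) => x i ω) ⁻¹' S := by
      ext ω
      simp only [hE, Set.mem_setOf_eq, Set.mem_preimage, hSdef]
      rw [hTchar ω t ht]
      constructor
      · rintro ⟨⟨h1, _⟩, h2⟩
        refine ⟨fun s hs1 hst => ?_, ?_⟩
        · rw [hΛX ω s hst.le]; exact h1 s hs1 hst
        · rw [hΛX ω t le_rfl]; exact h2
      · rintro ⟨h1, h2⟩
        rw [hΛX ω t le_rfl] at h2
        refine ⟨⟨fun s hs1 hst => ?_, h2 ▸ hc⟩, h2⟩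
        have := h1 s hs1 hst
        rwa [hΛX ω s hst.le] at this
    have hconst : ∀ y ∈ S, (∑ i : Fin t, Real.log (f₁ (y i) / f₀ (y i))) = c := by
      intro y hy
      have h1 : (∑ i : Fin t, Real.log (f₁ (y i) / f₀ (y i))) = Λ t y := by
        simp only [hΛ]
        rw [← Fin.sum_univ_eq_sum_range
          (fun i => Real.log (f₁ (pad y i) / f₀ (pad y i))) t]
        refine Finset.sum_congr rfl fun i _ => ?_
        simp only [hpad, dif_pos i.isLt, Fin.eta]
      rw [h1]
      exact hy.2
    have hkey := my_change_of_measure ν f₀ f₁ hf₀ hf₁ hf₀m hf₁m hf₀p hf₁p P₀ P₁ x hxm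
      hx₀ hx₁ hindep₀ hindep₁ t S hSm c hconst
    have hXm : Measurable fun ω (i : Fin t) => x i ω :=
      measurable_pi_lambda _ fun i => hxm i
    refine ⟨hES ▸ hXm hSm, ?_⟩
    rw [hES]
    exact hkey
  have hE0 : ∀ c : ℝ, c ≠ 0 → E 0 c = ∅ := by
    intro c hc0
    ext ω
    simp only [hE, Set.mem_setOf_eq, Set.mem_empty_iff_false, iff_false, not_and]
    intro _
    rw [hℓ0 ω]
    exact fun h => hc0 h.symm
  have hEm : ∀ (t : ℕ) (c : ℝ), c ≠ 0 → c ∉ Set.Ioo (-a) b → MeasurableSet (E t c) := by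
    intro t c hc0 hc
    rcases Nat.eq_zero_or_pos t with rfl | ht
    · rw [hE0 c hc0]; exact MeasurableSet.empty
    · exact (key t ht c hc).1
  have hEmul : ∀ (t : ℕ) (c : ℝ), c ≠ 0 → c ∉ Set.Ioo (-a) b →
      P₁ (E t c) = ENNReal.ofReal (Real.exp c) * P₀ (E t c) := by
    intro t c hc0 hc
    rcases Nat.eq_zero_or_pos t with rfl | ht
    · rw [hE0 c hc0]; simp
    · exact (key t ht c hc).2
  have hUnion : ∀ c : ℝ, {ω | ℓ (T ω) ω = c} = ⋃ t, E t c := by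
    intro c
    ext ω
    simp only [Set.mem_setOf_eq, Set.mem_iUnion, hE]
    constructor
    · intro h; exact ⟨T ω, rfl, h⟩
    · rintro ⟨t, rfl, h⟩; exact h
  have hdisj : ∀ c : ℝ, Pairwise (Function.onFun Disjoint fun t => E t c) := by
    intro c t u htu
    simp only [Function.onFun, hE]
    apply Set.disjoint_left.mpr
    rintro ω ⟨h1, _⟩ ⟨h2, _⟩
    exact htu (h1.symm.trans h2)
  have hb0 : (b : ℝ) ≠ 0 := hb.ne'
  have ha0 : (-a : ℝ) ≠ 0 := (neg_lt_zero.mpr ha).ne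
  have hbI : (b : ℝ) ∉ Set.Ioo (-a) b := fun h => lt_irrefl b h.2
  have haI : (-a : ℝ) ∉ Set.Ioo (-a) b := fun h => lt_irrefl (-a) h.1
  have hmb : MeasurableSet {ω | ℓ (T ω) ω = b} := by
    rw [hUnion b]; exact MeasurableSet.iUnion fun t => hEm t b hb0 hbI
  have hma : MeasurableSet {ω | ℓ (T ω) ω = -a} := by
    rw [hUnion (-a)]; exact MeasurableSet.iUnion fun t => hEm t (-a) ha0 haI
  have hPsum : ∀ (P : Measure Ω) (c : ℝ), c ≠ 0 → c ∉ Set.Ioo (-a) b →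
      P {ω | ℓ (T ω) ω = c} = ∑' t, P (E t c) := by
    intro P c hc0 hcI
    rw [hUnion c]
    exact measure_iUnion (hdisj c) (fun t => hEm t c hc0 hcI)
  have hA1 : P₁ {ω | ℓ (T ω) ω = b}
      = ENNReal.ofReal (Real.exp b) * P₀ {ω | ℓ (T ω) ω = b} := by
    rw [hPsum P₁ b hb0 hbI, hPsum P₀ b hb0 hbI, ← ENNReal.tsum_mul_left]
    exact tsum_congr fun t => hEmul t b hb0 hbI
  have hB1 : P₁ {ω | ℓ (T ω) ω = -a}
      = ENNReal.ofReal (Real.exp (-a)) * P₀ {ω | ℓ (T ω) ω = -a} := by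
    rw [hPsum P₁ (-a) ha0 haI, hPsum P₀ (-a) ha0 haI, ← ENNReal.tsum_mul_left]
    exact tsum_congr fun t => hEmul t (-a) ha0 haI
  have hdisjAB : Disjoint {ω | ℓ (T ω) ω = b} {ω | ℓ (T ω) ω = -a} := by
    apply Set.disjoint_left.mpr
    intro ω h1 h2
    rw [Set.mem_setOf_eq] at h1 h2
    rw [h1] at h2
    linarith
  have hone : ∀ (P : Measure Ω), IsProbabilityMeasure P →
      (∀ᵐ ω ∂P, {t : ℕ | 1 ≤ t ∧ ℓ t ω ∉ Set.Ioo (-a) b}.Nonempty ∧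
        (ℓ (T ω) ω = -a ∨ ℓ (T ω) ω = b)) →
      P {ω | ℓ (T ω) ω = b} + P {ω | ℓ (T ω) ω = -a} = 1 := by
    intro P hPp hno
    haveI := hPp
    rw [← measure_union hdisjAB hma]
    have hcompl : P ({ω | ℓ (T ω) ω = b} ∪ {ω | ℓ (T ω) ω = -a})ᶜ = 0 := by
      apply measure_mono_null _ (ae_iff.mp hno)
      intro ω hω
      simp only [Set.mem_compl_iff, Set.mem_union, Set.mem_setOf_eq] at hω
      simp only [Set.mem_setOf_eq]
      rintro ⟨-, h | h⟩
      · exact hω (Or.inr h)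
      · exact hω (Or.inl h)
    have h2 := measure_add_measure_compl (μ := P) (hmb.union hma)
    rw [hcompl, add_zero, measure_univ] at h2
    exact h2
  have e3 := hone P₀ inferInstance hno₀
  have e4 := hone P₁ inferInstance hno₁
  -- pass to real numbers and solve the linear system
  have hA₀top : P₀ {ω | ℓ (T ω) ω = b} ≠ ⊤ := measure_ne_top _ _
  have hB₀top : P₀ {ω | ℓ (T ω) ω = -a} ≠ ⊤ := measure_ne_top _ _
  set p := (P₀ {ω | ℓ (T ω) ω = b}).toReal with hp
  set q := (P₀ {ω | ℓ (T ω) ω = -a}).toReal with hq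
  have hpq : p + q = 1 := by
    have := congrArg ENNReal.toReal e3
    rwa [ENNReal.toReal_add hA₀top hB₀top, ENNReal.toReal_one] at this
  have heq : Real.exp b * p + Real.exp (-a) * q = 1 := by
    have := congrArg ENNReal.toReal e4
    rw [hA1, hB1, ENNReal.toReal_add (ENNReal.mul_ne_top ENNReal.ofReal_ne_top hA₀top)
      (ENNReal.mul_ne_top ENNReal.ofReal_ne_top hB₀top), ENNReal.toReal_mul,
      ENNReal.toReal_mul, ENNReal.toReal_ofReal (Real.exp_nonneg _),
      ENNReal.toReal_ofReal (Real.exp_nonneg _), ENNReal.toReal_one] at this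
    exact this
  have hlt : Real.exp (-a) < Real.exp b := Real.exp_lt_exp.mpr (by linarith)
  have hdne : Real.exp b - Real.exp (-a) ≠ 0 := (sub_pos.mpr hlt).ne'
  have hq' : q = 1 - p := by linarith
  have hpval : p = (1 - Real.exp (-a)) / (Real.exp b - Real.exp (-a)) := by
    rw [eq_div_iff hdne]
    rw [hq'] at heq
    linear_combination heq
  have hqval : Real.exp (-a) * q
      = Real.exp (-a) * (Real.exp b - 1) / (Real.exp b - Real.exp (-a)) := by
    rw [hq', hpval]
    field_simp
    ring
  constructor
  · rw [← hpval, hp, ENNReal.ofReal_toReal hA₀top]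
  · rw [hB1, ← hqval, ENNReal.ofReal_mul (Real.exp_nonneg _), hq,
      ENNReal.ofReal_toReal hB₀top]
end

section
/- Expected sample size of Wald's SPRT under the no-overshoot condition: assume the no-overshoot condition holds, that E₁[|log(f₁(x₁)/f₀(x₁))|] < ∞ with D₁ := E₁[log(f₁(x₁)/f₀(x₁))] ∈ (0, ∞) (the Kullback–Leibler divergence KL(f₁‖f₀)), and that E₀[|log(f₁(x₁)/f₀(x₁))|] < ∞ with D₀ := KL(f₀‖f₁) = −E₀[log(f₁(x₁)/f₀(x₁))] ∈ (0, ∞). Then E₁[T] = ( −a e^{−a}(e^{b} − 1) + b e^{b}(1 − e^{−a}) ) / ( D₁ (e^{b} − e^{−a}) ) and E₀[T] = ( −a(e^{b} − 1) + b(1 − e^{−a}) ) / ( −D₀ (e^{b} − e^{−a}) ). -/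
open MeasureTheory ProbabilityTheory Real Finset
open Filter

lemma helper_measT {Ω : Type*} [MeasurableSpace Ω] (ℓ : ℕ → Ω → ℝ)
    (hℓm : ∀ t, Measurable (ℓ t)) (a b : ℝ) (T : Ω → ℕ)
    (hT : ∀ ω, T ω = sInf {t : ℕ | 1 ≤ t ∧ ℓ t ω ∉ Set.Ioo (-a) b}) :
    Measurable T := by
  have hE : ∀ t : ℕ, MeasurableSet {ω | 1 ≤ t ∧ ℓ t ω ∉ Set.Ioo (-a) b} := by
    intro t
    by_cases h1 : 1 ≤ t
    · have : {ω | 1 ≤ t ∧ ℓ t ω ∉ Set.Ioo (-a) b} = (ℓ t) ⁻¹' (Set.Ioo (-a) b)ᶜ := by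
        ext ω; simp [h1]
      rw [this]; exact (hℓm t) measurableSet_Ioo.compl
    · have : {ω | 1 ≤ t ∧ ℓ t ω ∉ Set.Ioo (-a) b} = ∅ := by
        ext ω; simp [h1]
      rw [this]; exact MeasurableSet.empty
  apply measurable_to_countable'
  intro k
  rcases Nat.eq_zero_or_pos k with hk | hk
  · subst hk
    have : T ⁻¹' {0} = ⋂ t, {ω | 1 ≤ t ∧ ℓ t ω ∉ Set.Ioo (-a) b}ᶜ := by
      ext ω
      simp only [Set.mem_preimage, Set.mem_singleton_iff, hT, Set.mem_iInter, Set.mem_compl_iff]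
      constructor
      · intro h t ht
        have hne : {t : ℕ | 1 ≤ t ∧ ℓ t ω ∉ Set.Ioo (-a) b}.Nonempty := ⟨t, ht⟩
        have hmem := Nat.sInf_mem hne
        rw [h] at hmem
        exact absurd hmem.1 (by omega)
      · intro h
        have : {t : ℕ | 1 ≤ t ∧ ℓ t ω ∉ Set.Ioo (-a) b} = ∅ := by
          ext t; simp only [Set.mem_empty_iff_false, iff_false]; exact h t
        rw [this, Nat.sInf_empty]
    rw [this]
    exact MeasurableSet.iInter fun t => (hE t).compl
  · have : T ⁻¹' {k} = {ω | 1 ≤ k ∧ ℓ k ω ∉ Set.Ioo (-a) b} ∩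
        ⋂ j ∈ Finset.range k, {ω | 1 ≤ j ∧ ℓ j ω ∉ Set.Ioo (-a) b}ᶜ := by
      ext ω
      simp only [Set.mem_preimage, Set.mem_singleton_iff, hT, Set.mem_inter_iff,
        Set.mem_iInter, Set.mem_compl_iff, Finset.mem_range]
      constructor
      · intro h
        have hne : {t : ℕ | 1 ≤ t ∧ ℓ t ω ∉ Set.Ioo (-a) b}.Nonempty := by
          by_contra hc
          rw [Set.not_nonempty_iff_eq_empty] at hc
          rw [hc, Nat.sInf_empty] at h; omega
        constructor
        · exact h ▸ Nat.sInf_mem hne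
        · intro j hj
          exact Nat.notMem_of_lt_sInf (h ▸ hj)
      · rintro ⟨hk1, hlt⟩
        refine le_antisymm (Nat.sInf_le hk1) ?_
        by_contra hc
        push_neg at hc
        have hmem := Nat.sInf_mem (⟨k, hk1⟩ : {t : ℕ | 1 ≤ t ∧ ℓ t ω ∉ Set.Ioo (-a) b}.Nonempty)
        exact hlt _ hc hmem
    rw [this]
    exact (hE k).inter (MeasurableSet.iInter fun j => MeasurableSet.iInter fun _ => (hE j).compl)

lemma helper_measSV {Ω : Type*} [MeasurableSpace Ω] (ℓ : ℕ → Ω → ℝ)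
    (hℓm : ∀ t, Measurable (ℓ t)) (R : Ω → ℕ) (hR : Measurable R) :
    Measurable fun ω => ℓ (R ω) ω := by
  intro t ht
  have : (fun ω => ℓ (R ω) ω) ⁻¹' t = ⋃ k, (R ⁻¹' {k} ∩ (ℓ k) ⁻¹' t) := by
    ext ω
    simp only [Set.mem_preimage, Set.mem_iUnion, Set.mem_inter_iff, Set.mem_singleton_iff]
    exact ⟨fun h => ⟨R ω, rfl, h⟩, fun ⟨k, hk, h⟩ => hk ▸ h⟩
  rw [this]
  exact MeasurableSet.iUnion fun k => (hR (measurableSet_singleton k)).inter (hℓm k ht)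

lemma helper_decomp {Ω : Type*} [MeasurableSpace Ω] (P : Measure Ω) [IsProbabilityMeasure P]
    (Z : Ω → ℝ) (hZ : Measurable Z) (a b : ℝ) (hab : -a ≠ b)
    (hae : ∀ᵐ ω ∂P, Z ω = -a ∨ Z ω = b) (φ : ℝ → ℝ) :
    ∫ ω, φ (Z ω) ∂P = φ b * (P (Z ⁻¹' {b})).toReal + φ (-a) * (1 - (P (Z ⁻¹' {b})).toReal) := by
  set B := Z ⁻¹' {b} with hBdef
  have hB : MeasurableSet B := hZ (measurableSet_singleton b)
  have heq : ∀ᵐ ω ∂P, φ (Z ω) =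
      B.indicator (fun _ => φ b) ω + Bᶜ.indicator (fun _ => φ (-a)) ω := by
    filter_upwards [hae] with ω hω
    rcases hω with h | h
    · have hωB : ω ∉ B := by simp [hBdef, h]; exact fun hc => hab hc
      simp [h, Set.indicator_of_notMem hωB, Set.indicator_of_mem (Set.mem_compl hωB)]
    · have hωB : ω ∈ B := by simp [hBdef, h]
      simp [h, Set.indicator_of_mem hωB, Set.indicator_of_notMem (by simp [hωB] : ω ∉ Bᶜ)]
  rw [integral_congr_ae heq, integral_add ((integrable_const _).indicator hB)
    ((integrable_const _).indicator hB.compl), integral_indicator_const _ hB,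
    integral_indicator_const _ hB.compl, measureReal_def, measureReal_def, prob_compl_eq_one_sub hB]
  have hle : P B ≤ 1 := prob_le_one
  rw [ENNReal.toReal_sub_of_le hle (by simp), ENNReal.toReal_one]
  simp only [smul_eq_mul]
  ring


lemma helper_indep {𝒳 Ω : Type*} [MeasurableSpace 𝒳] [MeasurableSpace Ω] [Nonempty 𝒳]
    (P : Measure Ω) (x : ℕ → Ω → 𝒳) (hxm : ∀ i, Measurable (x i))
    (hindep : iIndepFun x P) (n : ℕ)
    (F : (ℕ → 𝒳) → ℝ) (hF : Measurable F)
    (hFdep : ∀ u v : ℕ → 𝒳, (∀ i, i < n → u i = v i) → F u = F v)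
    (G : 𝒳 → ℝ) (hG : Measurable G) :
    IndepFun (fun ω => F (fun i => x i ω)) (fun ω => G (x n ω)) P := by
  classical
  have hdisj : Disjoint (Finset.range n) ({n} : Finset ℕ) := by simp
  have h := hindep.indepFun_finset (Finset.range n) {n} hdisj hxm
  set φ : ({ i // i ∈ Finset.range n } → 𝒳) → ℝ :=
    fun v => F (fun i => if h : i ∈ Finset.range n then v ⟨i, h⟩ else Classical.arbitrary 𝒳)
    with hφ
  set ψ : ({ i // i ∈ ({n} : Finset ℕ) } → 𝒳) → ℝ := fun v => G (v ⟨n, Finset.mem_singleton_self n⟩) with hψ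
  have hφm : Measurable φ := by
    apply hF.comp
    apply measurable_pi_lambda
    intro i
    by_cases hi : i ∈ Finset.range n
    · simp only [hi, dif_pos]
      exact measurable_pi_apply _
    · simp only [hi, dif_neg, not_false_iff]
      exact measurable_const
  have hψm : Measurable ψ := hG.comp (measurable_pi_apply _)
  have h2 := h.comp hφm hψm
  convert h2 using 1
  · funext ω
    simp only [Function.comp_apply, hφ]
    apply hFdep
    intro i hi
    simp [Finset.mem_range.mpr hi]
  · rfl


lemma helper_ratio {𝒳 : Type*} [MeasurableSpace 𝒳] (ν : Measure 𝒳) (g h : 𝒳 → ℝ)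
    (hg : ∀ y, 0 < g y) (hh : ∀ y, 0 < h y) (hgm : Measurable g) (hhm : Measurable h)
    (hint : ∫⁻ y, ENNReal.ofReal (g y) ∂ν = 1) :
    Integrable (fun y => g y / h y) (ν.withDensity fun y => ENNReal.ofReal (h y)) ∧
      ∫ y, g y / h y ∂(ν.withDensity fun y => ENNReal.ofReal (h y)) = 1 := by
  have hnn : 0 ≤ᵐ[ν.withDensity fun y => ENNReal.ofReal (h y)] fun y => g y / h y :=
    ae_of_all _ fun y => (div_pos (hg y) (hh y)).le
  have hμ : ∫⁻ y, ENNReal.ofReal (g y / h y) ∂(ν.withDensity fun y => ENNReal.ofReal (h y))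
      = 1 := by
    rw [lintegral_withDensity_eq_lintegral_mul ν hhm.ennreal_ofReal
      (show Measurable fun y => ENNReal.ofReal (g y / h y) from (hgm.div hhm).ennreal_ofReal)]
    rw [← hint]
    apply lintegral_congr
    intro y
    simp only [Pi.mul_apply]
    rw [← ENNReal.ofReal_mul (hh y).le]
    congr 1
    have hne := (hh y).ne'
    field_simp
  have hi : Integrable (fun y => g y / h y) (ν.withDensity fun y => ENNReal.ofReal (h y)) := by
    refine ⟨(hgm.div hhm).aestronglyMeasurable, ?_⟩
    rw [hasFiniteIntegral_iff_ofReal hnn, hμ]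
    exact ENNReal.one_lt_top
  refine ⟨hi, ?_⟩
  rw [integral_eq_lintegral_of_nonneg_ae hnn (hgm.div hhm).aestronglyMeasurable, hμ]
  simp

lemma sprt_master {𝒳 Ω : Type*} [MeasurableSpace 𝒳] [MeasurableSpace Ω] [Nonempty 𝒳]
    (P : Measure Ω) [IsProbabilityMeasure P]
    (x : ℕ → Ω → 𝒳) (hxm : ∀ i, Measurable (x i))
    (hmap : ∀ i, P.map (x i) = P.map (x 0))
    (hindep : iIndepFun x P)
    (Y : 𝒳 → ℝ) (hYm : Measurable Y)
    (hint : Integrable (fun ω => Y (x 0 ω)) P)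
    (a b : ℝ) (ha : 0 < a) (hb : 0 < b)
    (ℓ : ℕ → Ω → ℝ) (hℓ : ∀ t ω, ℓ t ω = ∑ i ∈ Finset.range t, Y (x i ω))
    (T : Ω → ℕ) (hT : ∀ ω, T ω = sInf {t : ℕ | 1 ≤ t ∧ ℓ t ω ∉ Set.Ioo (-a) b})
    (hno : ∀ᵐ ω ∂P, {t : ℕ | 1 ≤ t ∧ ℓ t ω ∉ Set.Ioo (-a) b}.Nonempty ∧
      (ℓ (T ω) ω = -a ∨ ℓ (T ω) ω = b))
    (m : ℝ) (hm : m = ∫ ω, Y (x 0 ω) ∂P) (hm0 : m ≠ 0)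
    (s : ℝ) (hs : s = 1 ∨ s = -1)
    (hexpint : Integrable (fun ω => Real.exp (s * Y (x 0 ω))) P)
    (hexp1 : ∫ ω, Real.exp (s * Y (x 0 ω)) ∂P = 1) :
    Integrable (fun ω => (T ω : ℝ)) P ∧
      m * ∫ ω, (T ω : ℝ) ∂P = ∫ ω, ℓ (T ω) ω ∂P ∧
      ∫ ω, Real.exp (s * ℓ (T ω) ω) ∂P = 1 := by
  classical
  have hs1 : |s| = 1 := by rcases hs with h | h <;> simp [h]
  have hmax : (0:ℝ) ≤ max a b := le_trans ha.le (le_max_left a b)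
  have habs : ∀ z : ℝ, |z| ≤ max a b → Real.exp (s * z) ≤ Real.exp (max a b) := by
    intro z hz
    apply Real.exp_le_exp.2
    calc s * z ≤ |s * z| := le_abs_self _
      _ = |s| * |z| := abs_mul s z
      _ = |z| := by rw [hs1, one_mul]
      _ ≤ max a b := hz
  have hℓm : ∀ t, Measurable (ℓ t) := by
    intro t
    have : ℓ t = fun ω => ∑ i ∈ Finset.range t, Y (x i ω) := funext fun ω => hℓ t ω
    rw [this]
    exact Finset.measurable_sum _ fun i _ => hYm.comp (hxm i)
  have hTm : Measurable T := helper_measT ℓ hℓm a b T hT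
  have hminm : ∀ n : ℕ, Measurable fun ω => min (T ω) n := fun n =>
    (measurable_from_top (f := fun k => min k n)).comp hTm
  have hτm : ∀ n : ℕ, Measurable fun ω => ℓ (min (T ω) n) ω := fun n =>
    helper_measSV ℓ hℓm _ (hminm n)
  have hTSV : Measurable fun ω => ℓ (T ω) ω := helper_measSV ℓ hℓm T hTm
  -- identically distributed transfers
  have hYsm : ∀ n : ℕ, AEStronglyMeasurable Y (P.map (x n)) := fun n => hYm.aestronglyMeasurable
  have hYint : ∀ n, Integrable (fun ω => Y (x n ω)) P := by
    intro n
    have h1 : Integrable Y (P.map (x n)) := by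
      rw [hmap n]
      exact (integrable_map_measure (hYsm 0) (hxm 0).aemeasurable).2 hint
    exact (integrable_map_measure (hYsm n) (hxm n).aemeasurable).1 h1
  have hYmean : ∀ n, ∫ ω, Y (x n ω) ∂P = m := by
    intro n
    rw [hm, ← integral_map (hxm n).aemeasurable (hYsm n), hmap n,
      integral_map (hxm 0).aemeasurable (hYsm 0)]
  have hEm : Measurable fun y => Real.exp (s * Y y) := (measurable_const.mul hYm).exp
  have hEsm : ∀ n : ℕ, AEStronglyMeasurable (fun y => Real.exp (s * Y y)) (P.map (x n)) :=
    fun n => hEm.aestronglyMeasurable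
  have hEint : ∀ n, Integrable (fun ω => Real.exp (s * Y (x n ω))) P := by
    intro n
    have h1 : Integrable (fun y => Real.exp (s * Y y)) (P.map (x n)) := by
      rw [hmap n]
      exact (integrable_map_measure (hEsm 0) (hxm 0).aemeasurable).2 hexpint
    exact (integrable_map_measure (hEsm n) (hxm n).aemeasurable).1 h1
  have hEmean : ∀ n, ∫ ω, Real.exp (s * Y (x n ω)) ∂P = 1 := by
    intro n
    rw [← hexp1, ← integral_map (hxm n).aemeasurable (hEsm n), hmap n,
      integral_map (hxm 0).aemeasurable (hEsm 0)]
  -- the pre-T events and indicators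
  set A : ℕ → Set Ω := fun n => {ω | ∀ t, 1 ≤ t → t ≤ n → ℓ t ω ∈ Set.Ioo (-a) b} with hA
  have hAm : ∀ n, MeasurableSet (A n) := by
    intro n
    have : A n = ⋂ t, ⋂ (_ : 1 ≤ t), ⋂ (_ : t ≤ n), (ℓ t) ⁻¹' (Set.Ioo (-a) b) := by
      ext ω; simp [hA]
    rw [this]
    exact MeasurableSet.iInter fun t => MeasurableSet.iInter fun _ =>
      MeasurableSet.iInter fun _ => (hℓm t) measurableSet_Ioo
  set χ : ℕ → Ω → ℝ := fun n => (A n).indicator (fun _ => 1) with hχ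
  have hχm : ∀ n, Measurable (χ n) := fun n => measurable_const.indicator (hAm n)
  have hχbd : ∀ n ω, |χ n ω| ≤ 1 := by
    intro n ω
    by_cases h : ω ∈ A n <;> simp [hχ, Set.indicator, h]
  have hχint : ∀ n, Integrable (χ n) P := fun n => (integrable_const (1:ℝ)).indicator (hAm n)
  -- almost sure structural facts
  have hgood : ∀ᵐ ω ∂P, (ℓ (T ω) ω = -a ∨ ℓ (T ω) ω = b) ∧
      (∀ t, t ≤ T ω → |ℓ t ω| ≤ max a b) ∧ (∀ n, ω ∈ A n ↔ n < T ω) := by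
    filter_upwards [hno] with ω hω
    obtain ⟨hne, hval⟩ := hω
    have hTmem : T ω ∈ {t : ℕ | 1 ≤ t ∧ ℓ t ω ∉ Set.Ioo (-a) b} := by
      rw [hT]; exact Nat.sInf_mem hne
    have hlt : ∀ t, 1 ≤ t → t < T ω → ℓ t ω ∈ Set.Ioo (-a) b := by
      intro t h1 htlt
      by_contra hc
      have hmem : t ∈ {t : ℕ | 1 ≤ t ∧ ℓ t ω ∉ Set.Ioo (-a) b} := ⟨h1, hc⟩
      have := Nat.sInf_le hmem
      rw [← hT ω] at this
      omega
    refine ⟨hval, ?_, ?_⟩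
    · intro t hle
      rcases Nat.eq_zero_or_pos t with h0 | h1
      · subst h0
        have : ℓ 0 ω = 0 := by simp [hℓ]
        rw [this]; simpa using hmax
      rcases eq_or_lt_of_le hle with heq | hlt'
      · rw [heq]
        rcases hval with h | h <;> rw [h] <;> rw [abs_le] <;>
          constructor <;>
          simp [neg_le, le_max_iff, ha.le, hb.le, neg_le_neg_iff] <;>
          first
            | exact Or.inl le_rfl
            | exact Or.inr le_rfl
            | exact Or.inl (by linarith)
            | exact Or.inr (by linarith)
      · have := hlt t h1 hlt'
        rw [abs_le]
        constructor
        · have := this.1; have := le_max_left a b; linarith [this]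
        · have := this.2; have := le_max_right a b; linarith [this]
    · intro n
      constructor
      · intro hAn
        by_contra hc
        push_neg at hc
        exact hTmem.2 (hAn (T ω) hTmem.1 hc)
      · intro hn t h1 h2
        exact hlt t h1 (lt_of_le_of_lt h2 hn)
  -- key independence identities
  have E1 : ∀ n, ∫ ω, χ n ω * Y (x n ω) ∂P = m * ∫ ω, χ n ω ∂P := by
    intro n
    set S : Set (ℕ → 𝒳) :=
      {u | ∀ t, 1 ≤ t → t ≤ n → (∑ i ∈ Finset.range t, Y (u i)) ∈ Set.Ioo (-a) b} with hS
    have hSm : MeasurableSet S := by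
      have : S = ⋂ t, ⋂ (_ : 1 ≤ t), ⋂ (_ : t ≤ n),
          (fun u : ℕ → 𝒳 => ∑ i ∈ Finset.range t, Y (u i)) ⁻¹' (Set.Ioo (-a) b) := by
        ext u; simp [hS]
      rw [this]
      exact MeasurableSet.iInter fun t => MeasurableSet.iInter fun _ =>
        MeasurableSet.iInter fun _ =>
          (Finset.measurable_sum _ fun i _ => hYm.comp (measurable_pi_apply i)) measurableSet_Ioo
    set F : (ℕ → 𝒳) → ℝ := S.indicator (fun _ => 1) with hF
    have hFm : Measurable F := measurable_const.indicator hSm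
    have hiff : ∀ u v : ℕ → 𝒳, (∀ i, i < n → u i = v i) → (u ∈ S ↔ v ∈ S) := by
      intro u v huv
      have hsum : ∀ t, t ≤ n →
          (∑ i ∈ Finset.range t, Y (u i)) = ∑ i ∈ Finset.range t, Y (v i) := fun t ht =>
        Finset.sum_congr rfl fun i hi => by
          rw [huv i (lt_of_lt_of_le (Finset.mem_range.mp hi) ht)]
      constructor <;> intro h t h1 h2
      · rw [← hsum t h2]; exact h t h1 h2
      · rw [hsum t h2]; exact h t h1 h2
    have hFdep : ∀ u v : ℕ → 𝒳, (∀ i, i < n → u i = v i) → F u = F v := by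
      intro u v huv
      by_cases h : u ∈ S
      · rw [hF, Set.indicator_of_mem h, Set.indicator_of_mem ((hiff u v huv).1 h)]
      · rw [hF, Set.indicator_of_notMem h,
          Set.indicator_of_notMem (fun hv => h ((hiff u v huv).2 hv))]
    have hcomp : (fun ω => F (fun i => x i ω)) = χ n := by
      funext ω
      have hmem : (fun i => x i ω) ∈ S ↔ ω ∈ A n := by
        constructor <;> intro h t h1 h2
        · rw [hℓ]; exact h t h1 h2
        · rw [← hℓ]; exact h t h1 h2
      by_cases h : ω ∈ A n
      · rw [hF, Set.indicator_of_mem (hmem.2 h)]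
        simp [hχ, Set.indicator, h]
      · rw [hF, Set.indicator_of_notMem (fun hu => h (hmem.1 hu))]
        simp [hχ, Set.indicator, h]
    have hIF := helper_indep P x hxm hindep n F hFm hFdep Y hYm
    rw [hcomp] at hIF
    rw [hIF.integral_fun_mul_eq_mul_integral (hχm n).aestronglyMeasurable
      ((hYm.comp (hxm n)).aestronglyMeasurable), hYmean n, mul_comm]
  have E2 : ∀ n, ∫ ω, (χ n ω * Real.exp (s * ℓ n ω)) * (Real.exp (s * Y (x n ω)) - 1) ∂P
      = 0 := by
    intro n
    set S : Set (ℕ → 𝒳) :=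
      {u | ∀ t, 1 ≤ t → t ≤ n → (∑ i ∈ Finset.range t, Y (u i)) ∈ Set.Ioo (-a) b} with hS
    have hSm : MeasurableSet S := by
      have : S = ⋂ t, ⋂ (_ : 1 ≤ t), ⋂ (_ : t ≤ n),
          (fun u : ℕ → 𝒳 => ∑ i ∈ Finset.range t, Y (u i)) ⁻¹' (Set.Ioo (-a) b) := by
        ext u; simp [hS]
      rw [this]
      exact MeasurableSet.iInter fun t => MeasurableSet.iInter fun _ =>
        MeasurableSet.iInter fun _ =>
          (Finset.measurable_sum _ fun i _ => hYm.comp (measurable_pi_apply i)) measurableSet_Ioo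
    set F : (ℕ → 𝒳) → ℝ :=
      fun u => S.indicator (fun _ => 1) u * Real.exp (s * ∑ i ∈ Finset.range n, Y (u i))
      with hF
    have hFm : Measurable F :=
      (measurable_const.indicator hSm).mul
        ((measurable_const.mul
          (Finset.measurable_sum _ fun i _ => hYm.comp (measurable_pi_apply i))).exp)
    have hiff : ∀ u v : ℕ → 𝒳, (∀ i, i < n → u i = v i) → (u ∈ S ↔ v ∈ S) := by
      intro u v huv
      have hsum : ∀ t, t ≤ n →
          (∑ i ∈ Finset.range t, Y (u i)) = ∑ i ∈ Finset.range t, Y (v i) := fun t ht =>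
        Finset.sum_congr rfl fun i hi => by
          rw [huv i (lt_of_lt_of_le (Finset.mem_range.mp hi) ht)]
      constructor <;> intro h t h1 h2
      · rw [← hsum t h2]; exact h t h1 h2
      · rw [hsum t h2]; exact h t h1 h2
    have hFdep : ∀ u v : ℕ → 𝒳, (∀ i, i < n → u i = v i) → F u = F v := by
      intro u v huv
      have hsum : (∑ i ∈ Finset.range n, Y (u i)) = ∑ i ∈ Finset.range n, Y (v i) :=
        Finset.sum_congr rfl fun i hi => by rw [huv i (Finset.mem_range.mp hi)]
      rw [hF]
      simp only
      rw [hsum]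
      congr 1
      by_cases h : u ∈ S
      · rw [Set.indicator_of_mem h, Set.indicator_of_mem ((hiff u v huv).1 h)]
      · rw [Set.indicator_of_notMem h,
          Set.indicator_of_notMem (fun hv => h ((hiff u v huv).2 hv))]
    have hcomp : (fun ω => F (fun i => x i ω))
        = fun ω => χ n ω * Real.exp (s * ℓ n ω) := by
      funext ω
      have hmem : (fun i => x i ω) ∈ S ↔ ω ∈ A n := by
        constructor <;> intro h t h1 h2
        · rw [hℓ]; exact h t h1 h2
        · rw [← hℓ]; exact h t h1 h2
      have hsum : (∑ i ∈ Finset.range n, Y (x i ω)) = ℓ n ω := (hℓ n ω).symm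
      rw [hF]
      simp only
      rw [hsum]
      congr 1
      by_cases h : ω ∈ A n
      · rw [Set.indicator_of_mem (hmem.2 h)]
        simp [hχ, Set.indicator, h]
      · rw [Set.indicator_of_notMem (fun hu => h (hmem.1 hu))]
        simp [hχ, Set.indicator, h]
    have hIF := helper_indep P x hxm hindep n F hFm hFdep
      (fun y => Real.exp (s * Y y) - 1) (hEm.sub measurable_const)
    rw [hcomp] at hIF
    rw [hIF.integral_fun_mul_eq_mul_integral ((hχm n).mul ((measurable_const.mul (hℓm n)).exp)).aestronglyMeasurable
      (((hEm.sub measurable_const).comp (hxm n)).aestronglyMeasurable)]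
    have : ∫ ω, (Real.exp (s * Y (x n ω)) - 1) ∂P = 0 := by
      rw [integral_sub (hEint n) (integrable_const 1), hEmean n]
      simp
    rw [this, mul_zero]
  -- pointwise identities, a.e.
  have hchiT : ∀ᵐ ω ∂P, ∀ i, χ i ω = if i < T ω then (1:ℝ) else 0 := by
    filter_upwards [hgood] with ω hg
    intro i
    by_cases h : i < T ω
    · rw [if_pos h, hχ]; exact Set.indicator_of_mem ((hg.2.2 i).2 h) _
    · rw [if_neg h, hχ]; exact Set.indicator_of_notMem (fun hA => h ((hg.2.2 i).1 hA)) _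
  have hfilt : ∀ (K n : ℕ),
      (Finset.range n).filter (fun i => i < K) = Finset.range (min K n) := by
    intro K n; ext i
    simp only [Finset.mem_filter, Finset.mem_range, lt_min_iff]
    omega
  have A2 : ∀ n, ∀ᵐ ω ∂P, ((min (T ω) n : ℕ) : ℝ) = ∑ i ∈ Finset.range n, χ i ω := by
    intro n
    filter_upwards [hchiT] with ω hχT
    symm
    rw [Finset.sum_congr rfl fun i _ => hχT i, Finset.sum_boole, hfilt, Finset.card_range]
  have A3 : ∀ n, ∀ᵐ ω ∂P,
      ℓ (min (T ω) n) ω = ∑ i ∈ Finset.range n, χ i ω * Y (x i ω) := by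
    intro n
    filter_upwards [hchiT] with ω hχT
    have hite : ∀ i, χ i ω * Y (x i ω) = if i < T ω then Y (x i ω) else 0 := by
      intro i; rw [hχT i]; by_cases h : i < T ω <;> simp [h]
    rw [Finset.sum_congr rfl fun i _ => hite i, ← Finset.sum_filter, hfilt, hℓ]
  have A4 : ∀ n, ∀ᵐ ω ∂P, Real.exp (s * ℓ (min (T ω) (n+1)) ω)
      = Real.exp (s * ℓ (min (T ω) n) ω)
        + (χ n ω * Real.exp (s * ℓ n ω)) * (Real.exp (s * Y (x n ω)) - 1) := by
    intro n
    filter_upwards [hchiT] with ω hχT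
    by_cases h : n < T ω
    · have h1 : min (T ω) n = n := min_eq_right h.le
      have h2 : min (T ω) (n+1) = n+1 := min_eq_right (by omega)
      have h3 : ℓ (n+1) ω = ℓ n ω + Y (x n ω) := by
        rw [hℓ, hℓ, Finset.sum_range_succ]
      rw [h1, h2, h3, hχT n, if_pos h, mul_add, Real.exp_add]
      ring
    · have hle : T ω ≤ n := not_lt.1 h
      have h1 : min (T ω) n = T ω := min_eq_left hle
      have h2 : min (T ω) (n+1) = T ω := min_eq_left (by omega)
      rw [h1, h2, hχT n, if_neg h]
      ring
  -- bounds
  have hbdmin : ∀ n, ∀ᵐ ω ∂P, |ℓ (min (T ω) n) ω| ≤ max a b := by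
    intro n; filter_upwards [hgood] with ω hg
    exact hg.2.1 _ (min_le_left _ _)
  -- integrability
  have hχYint : ∀ i, Integrable (fun ω => χ i ω * Y (x i ω)) P := fun i =>
    (hYint i).bdd_mul (hχm i).aestronglyMeasurable
      (c := 1) (ae_of_all _ fun ω => by rw [Real.norm_eq_abs]; exact hχbd i ω)
  have hstopint : ∀ n, Integrable (fun ω => Real.exp (s * ℓ (min (T ω) n) ω)) P := by
    intro n
    apply Integrable.mono' (integrable_const (Real.exp (max a b)))
      ((measurable_const.mul (hτm n)).exp.aestronglyMeasurable)
    filter_upwards [hbdmin n] with ω hω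
    rw [Real.norm_eq_abs, abs_of_pos (Real.exp_pos _)]
    exact habs _ hω
  have hfstbd : ∀ n ω, ‖χ n ω * Real.exp (s * ℓ n ω)‖ ≤ Real.exp (max a b) := by
    intro n ω
    by_cases h : ω ∈ A n
    · have h1 : χ n ω = 1 := by rw [hχ]; exact Set.indicator_of_mem h _
      have h2 : |ℓ n ω| ≤ max a b := by
        rcases Nat.eq_zero_or_pos n with h0 | h1'
        · subst h0
          have hz : ℓ 0 ω = 0 := by simp [hℓ]
          rw [hz]; simpa using hmax
        · have hmem : ℓ n ω ∈ Set.Ioo (-a) b := h n h1' le_rfl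
          rw [abs_le]
          constructor
          · have := hmem.1; have := le_max_left a b; linarith
          · have := hmem.2; have := le_max_right a b; linarith
      rw [h1, one_mul, Real.norm_eq_abs, abs_of_pos (Real.exp_pos _)]
      exact habs _ h2
    · have h1 : χ n ω = 0 := by rw [hχ]; exact Set.indicator_of_notMem h _
      rw [h1, zero_mul, norm_zero]
      exact (Real.exp_pos _).le
  have hdiffint : ∀ n, Integrable
      (fun ω => (χ n ω * Real.exp (s * ℓ n ω)) * (Real.exp (s * Y (x n ω)) - 1)) P := fun n =>
    ((hEint n).sub (integrable_const 1)).bdd_mul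
      ((hχm n).mul ((measurable_const.mul (hℓm n)).exp)).aestronglyMeasurable
      (c := Real.exp (max a b)) (ae_of_all _ (hfstbd n))
  -- Wald at finite horizon
  have WaldN : ∀ n, ∫ ω, ℓ (min (T ω) n) ω ∂P
      = m * ∫ ω, ((min (T ω) n : ℕ) : ℝ) ∂P := by
    intro n
    rw [integral_congr_ae (A3 n), integral_congr_ae (A2 n)]
    rw [integral_finset_sum _ fun i _ => hχYint i,
      integral_finset_sum _ fun i _ => hχint i, Finset.mul_sum]
    exact Finset.sum_congr rfl fun i _ => E1 i
  -- exponential martingale at finite horizon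
  have ExpN : ∀ n, ∫ ω, Real.exp (s * ℓ (min (T ω) n) ω) ∂P = 1 := by
    intro n
    induction n with
    | zero =>
      have hb0 : ∀ ω, Real.exp (s * ℓ (min (T ω) 0) ω) = 1 := by
        intro ω; simp [hℓ]
      rw [integral_congr_ae (ae_of_all _ hb0)]
      simp
    | succ n ih =>
      rw [integral_congr_ae (A4 n), integral_add (hstopint n) (hdiffint n), ih, E2 n]
      norm_num
  -- integrability of T
  have hminRm : ∀ n : ℕ, Measurable fun ω => ((min (T ω) n : ℕ) : ℝ) := fun n =>
    (measurable_from_top (f := fun k : ℕ => (k : ℝ))).comp (hminm n)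
  have hTRm : Measurable fun ω => ((T ω : ℕ) : ℝ) :=
    (measurable_from_top (f := fun k : ℕ => (k : ℝ))).comp hTm
  have hτint : ∀ n, Integrable (fun ω => ((min (T ω) n : ℕ) : ℝ)) P := by
    intro n
    apply Integrable.mono' (integrable_const (n : ℝ)) (hminRm n).aestronglyMeasurable
    apply ae_of_all; intro ω
    rw [Real.norm_eq_abs, abs_of_nonneg (by positivity)]
    exact_mod_cast min_le_right (T ω) n
  have hτnonneg : ∀ n, 0 ≤ ∫ ω, ((min (T ω) n : ℕ) : ℝ) ∂P := fun n =>
    integral_nonneg fun ω => by positivity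
  have hτval : ∀ n, ∫ ω, ((min (T ω) n : ℕ) : ℝ) ∂P ≤ max a b / |m| := by
    intro n
    have h2 : |∫ ω, ℓ (min (T ω) n) ω ∂P| ≤ max a b := by
      have hb2 := norm_integral_le_of_norm_le_const (μ := P)
        (f := fun ω => ℓ (min (T ω) n) ω) (C := max a b) ?_
      · rw [Real.norm_eq_abs] at hb2; simpa [measure_univ] using hb2
      · filter_upwards [hbdmin n] with ω hω; rwa [Real.norm_eq_abs]
    have h3 : |m| * ∫ ω, ((min (T ω) n : ℕ) : ℝ) ∂P = |∫ ω, ℓ (min (T ω) n) ω ∂P| := by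
      rw [WaldN n, abs_mul, abs_of_nonneg (hτnonneg n)]
    rw [le_div_iff₀ (abs_pos.2 hm0)]
    calc (∫ ω, ((min (T ω) n : ℕ) : ℝ) ∂P) * |m|
        = |m| * ∫ ω, ((min (T ω) n : ℕ) : ℝ) ∂P := mul_comm _ _
      _ = |∫ ω, ℓ (min (T ω) n) ω ∂P| := h3
      _ ≤ max a b := h2
  have hTint : Integrable (fun ω => (T ω : ℝ)) P := by
    refine ⟨hTRm.aestronglyMeasurable, ?_⟩
    rw [hasFiniteIntegral_iff_ofReal (ae_of_all _ fun ω => by positivity)]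
    have hpt : ∀ ω, ENNReal.ofReal ((T ω : ℕ) : ℝ)
        = ⨆ n, ENNReal.ofReal ((min (T ω) n : ℕ) : ℝ) := by
      intro ω
      apply le_antisymm
      · apply le_iSup_of_le (T ω)
        simp
      · exact iSup_le fun n => ENNReal.ofReal_le_ofReal (by exact_mod_cast min_le_left _ _)
    have hmono : Monotone fun n : ℕ => fun ω => ENNReal.ofReal ((min (T ω) n : ℕ) : ℝ) := by
      intro n1 n2 h12 ω
      apply ENNReal.ofReal_le_ofReal
      exact_mod_cast min_le_min le_rfl h12
    have hkey : ∫⁻ ω, ENNReal.ofReal ((T ω : ℕ) : ℝ) ∂P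
        = ⨆ n, ∫⁻ ω, ENNReal.ofReal ((min (T ω) n : ℕ) : ℝ) ∂P := by
      calc ∫⁻ ω, ENNReal.ofReal ((T ω : ℕ) : ℝ) ∂P
          = ∫⁻ ω, ⨆ n, ENNReal.ofReal ((min (T ω) n : ℕ) : ℝ) ∂P := by
            apply lintegral_congr; intro ω; exact hpt ω
        _ = ⨆ n, ∫⁻ ω, ENNReal.ofReal ((min (T ω) n : ℕ) : ℝ) ∂P :=
            lintegral_iSup (fun n => (hminRm n).ennreal_ofReal) hmono
    rw [hkey]
    have hle : (⨆ n, ∫⁻ ω, ENNReal.ofReal ((min (T ω) n : ℕ) : ℝ) ∂P)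
        ≤ ENNReal.ofReal (max a b / |m|) := by
      apply iSup_le
      intro n
      rw [← ofReal_integral_eq_lintegral_ofReal (hτint n)
        (ae_of_all _ fun ω => by positivity)]
      exact ENNReal.ofReal_le_ofReal (hτval n)
    exact lt_of_le_of_lt hle ENNReal.ofReal_lt_top
  -- limits
  have htendT : Tendsto (fun n => ∫ ω, ((min (T ω) n : ℕ) : ℝ) ∂P) atTop
      (nhds (∫ ω, (T ω : ℝ) ∂P)) := by
    apply tendsto_integral_of_dominated_convergence (fun ω => (T ω : ℝ))
      (fun n => (hminRm n).aestronglyMeasurable) hTint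
    · intro n
      apply ae_of_all; intro ω
      rw [Real.norm_eq_abs, abs_of_nonneg (by positivity)]
      exact_mod_cast min_le_left (T ω) n
    · apply ae_of_all; intro ω
      apply tendsto_atTop_of_eventually_const (i₀ := T ω)
      intro n hn; rw [min_eq_left hn]
  have htendL : Tendsto (fun n => ∫ ω, ℓ (min (T ω) n) ω ∂P) atTop
      (nhds (∫ ω, ℓ (T ω) ω ∂P)) := by
    apply tendsto_integral_of_dominated_convergence (fun _ => max a b)
      (fun n => (hτm n).aestronglyMeasurable) (integrable_const _)
    · intro n; filter_upwards [hbdmin n] with ω hω; rwa [Real.norm_eq_abs]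
    · apply ae_of_all; intro ω
      apply tendsto_atTop_of_eventually_const (i₀ := T ω)
      intro n hn; rw [min_eq_left hn]
  have htendE : Tendsto (fun n => ∫ ω, Real.exp (s * ℓ (min (T ω) n) ω) ∂P) atTop
      (nhds (∫ ω, Real.exp (s * ℓ (T ω) ω) ∂P)) := by
    apply tendsto_integral_of_dominated_convergence (fun _ => Real.exp (max a b))
      (fun n => ((measurable_const.mul (hτm n)).exp).aestronglyMeasurable)
      (integrable_const _)
    · intro n; filter_upwards [hbdmin n] with ω hω
      rw [Real.norm_eq_abs, abs_of_pos (Real.exp_pos _)]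
      exact habs _ hω
    · apply ae_of_all; intro ω
      apply tendsto_atTop_of_eventually_const (i₀ := T ω)
      intro n hn; show Real.exp (s * ℓ (min (T ω) n) ω) = _; rw [min_eq_left hn]
  refine ⟨hTint, ?_, ?_⟩
  · have h1 : Tendsto (fun n => ∫ ω, ℓ (min (T ω) n) ω ∂P) atTop
        (nhds (m * ∫ ω, (T ω : ℝ) ∂P)) := by
      have h2 := htendT.const_mul m
      simpa only [← WaldN] using h2
    exact tendsto_nhds_unique h1 htendL
  · have h1 : Tendsto (fun n => ∫ ω, Real.exp (s * ℓ (min (T ω) n) ω) ∂P) atTop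
        (nhds 1) := by
      simp only [ExpN]; exact tendsto_const_nhds
    exact tendsto_nhds_unique htendE h1



set_option maxHeartbeats 1000000 in
/-- expected sample size of Wald's SPRT under the no-overshoot
condition: with i.i.d. observations having strictly positive densities `f₀`
(under `P₀`) and `f₁` (under `P₁`), log-likelihood ratio process `ℓ_t`, SPRT
stopping time `T = inf {t ≥ 1 : ℓ_t ∉ (−a, b)}`, the no-overshoot condition,
integrability of the log-likelihood ratio with
`D₁ = E₁[log (f₁ x₁ / f₀ x₁)] = KL(f₁‖f₀) ∈ (0,∞)` and
`D₀ = KL(f₀‖f₁) = −E₀[log (f₁ x₁ / f₀ x₁)] ∈ (0,∞)`, one has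
`E₁[T] = (−a e^{−a}(e^b − 1) + b e^b (1 − e^{−a})) / (D₁ (e^b − e^{−a}))` and
`E₀[T] = (−a(e^b − 1) + b(1 − e^{−a})) / (−D₀ (e^b − e^{−a}))`. -/
theorem sprt_expected_sample_size_no_overshoot
    {𝒳 Ω : Type*} [MeasurableSpace 𝒳] [MeasurableSpace Ω]
    (ν : Measure 𝒳) [SigmaFinite ν]
    (f₀ f₁ : 𝒳 → ℝ) (hf₀ : ∀ y, 0 < f₀ y) (hf₁ : ∀ y, 0 < f₁ y)
    (hf₀m : Measurable f₀) (hf₁m : Measurable f₁)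
    (hf₀p : IsProbabilityMeasure (ν.withDensity fun y => ENNReal.ofReal (f₀ y)))
    (hf₁p : IsProbabilityMeasure (ν.withDensity fun y => ENNReal.ofReal (f₁ y)))
    (P₀ P₁ : Measure Ω) [IsProbabilityMeasure P₀] [IsProbabilityMeasure P₁]
    (x : ℕ → Ω → 𝒳) (hxm : ∀ i, Measurable (x i))
    (hx₀ : ∀ i, Measure.map (x i) P₀ = ν.withDensity fun y => ENNReal.ofReal (f₀ y))
    (hx₁ : ∀ i, Measure.map (x i) P₁ = ν.withDensity fun y => ENNReal.ofReal (f₁ y))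
    (hindep₀ : iIndepFun x P₀)
    (hindep₁ : iIndepFun x P₁)
    (a b : ℝ) (ha : 0 < a) (hb : 0 < b)
    (ℓ : ℕ → Ω → ℝ)
    (hℓ : ∀ t ω, ℓ t ω = ∑ i ∈ Finset.range t, Real.log (f₁ (x i ω) / f₀ (x i ω)))
    (T : Ω → ℕ)
    (hT : ∀ ω, T ω = sInf {t : ℕ | 1 ≤ t ∧ ℓ t ω ∉ Set.Ioo (-a) b})
    (hno₀ : ∀ᵐ ω ∂P₀, {t : ℕ | 1 ≤ t ∧ ℓ t ω ∉ Set.Ioo (-a) b}.Nonempty ∧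
      (ℓ (T ω) ω = -a ∨ ℓ (T ω) ω = b))
    (hno₁ : ∀ᵐ ω ∂P₁, {t : ℕ | 1 ≤ t ∧ ℓ t ω ∉ Set.Ioo (-a) b}.Nonempty ∧
      (ℓ (T ω) ω = -a ∨ ℓ (T ω) ω = b))
    -- integrability and positivity of the KL divergences
    (hint₁ : Integrable (fun ω => Real.log (f₁ (x 0 ω) / f₀ (x 0 ω))) P₁)
    (hint₀ : Integrable (fun ω => Real.log (f₁ (x 0 ω) / f₀ (x 0 ω))) P₀)
    (D₁ D₀ : ℝ)
    (hD₁ : D₁ = ∫ ω, Real.log (f₁ (x 0 ω) / f₀ (x 0 ω)) ∂P₁) (hD₁pos : 0 < D₁)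
    (hD₀ : D₀ = -∫ ω, Real.log (f₁ (x 0 ω) / f₀ (x 0 ω)) ∂P₀) (hD₀pos : 0 < D₀) :
    (∫ ω, (T ω : ℝ) ∂P₁ =
        (-a * Real.exp (-a) * (Real.exp b - 1) + b * Real.exp b * (1 - Real.exp (-a))) /
          (D₁ * (Real.exp b - Real.exp (-a)))) ∧
      (∫ ω, (T ω : ℝ) ∂P₀ =
        (-a * (Real.exp b - 1) + b * (1 - Real.exp (-a))) /
          (-D₀ * (Real.exp b - Real.exp (-a)))) := by
  classical
  have hne𝒳 : Nonempty 𝒳 := by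
    by_contra hc
    rw [not_nonempty_iff] at hc
    have h1 := hf₀p.measure_univ
    rw [Set.univ_eq_empty_iff.2 hc, measure_empty] at h1
    exact zero_ne_one h1
  have hν₀ : ∫⁻ y, ENNReal.ofReal (f₀ y) ∂ν = 1 := by
    have h1 := hf₀p.measure_univ
    rwa [withDensity_apply _ MeasurableSet.univ, setLIntegral_univ] at h1
  have hν₁ : ∫⁻ y, ENNReal.ofReal (f₁ y) ∂ν = 1 := by
    have h1 := hf₁p.measure_univ
    rwa [withDensity_apply _ MeasurableSet.univ, setLIntegral_univ] at h1
  have hYm : Measurable fun y => Real.log (f₁ y / f₀ y) := (hf₁m.div hf₀m).log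
  have hℓm : ∀ t, Measurable (ℓ t) := by
    intro t
    have ht : ℓ t = fun ω => ∑ i ∈ Finset.range t, Real.log (f₁ (x i ω) / f₀ (x i ω)) :=
      funext fun ω => hℓ t ω
    rw [ht]
    exact Finset.measurable_sum _ fun i _ => hYm.comp (hxm i)
  have hTm : Measurable T := helper_measT ℓ hℓm a b T hT
  have hZm : Measurable fun ω => ℓ (T ω) ω := helper_measSV ℓ hℓm T hTm
  have hab : -a ≠ b := ne_of_lt (by linarith)
  have hmap₁ : ∀ i, P₁.map (x i) = P₁.map (x 0) := fun i => by rw [hx₁ i, hx₁ 0]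
  have hmap₀ : ∀ i, P₀.map (x i) = P₀.map (x 0) := fun i => by rw [hx₀ i, hx₀ 0]
  obtain ⟨hr1int, hr1val⟩ := helper_ratio ν f₀ f₁ hf₀ hf₁ hf₀m hf₁m hν₀
  obtain ⟨hr0int, hr0val⟩ := helper_ratio ν f₁ f₀ hf₁ hf₀ hf₁m hf₀m hν₁
  have hpt₁ : ∀ y, Real.exp ((-1) * Real.log (f₁ y / f₀ y)) = f₀ y / f₁ y := by
    intro y
    rw [neg_one_mul, Real.exp_neg, Real.exp_log (div_pos (hf₁ y) (hf₀ y)), inv_div]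
  have hpt₀ : ∀ y, Real.exp ((1:ℝ) * Real.log (f₁ y / f₀ y)) = f₁ y / f₀ y := by
    intro y
    rw [one_mul, Real.exp_log (div_pos (hf₁ y) (hf₀ y))]
  have hexpint₁ :
      Integrable (fun ω => Real.exp ((-1) * Real.log (f₁ (x 0 ω) / f₀ (x 0 ω)))) P₁ := by
    have h1 : Integrable (fun y => f₀ y / f₁ y) (P₁.map (x 0)) := by
      rw [hx₁ 0]; exact hr1int
    have h2 := (integrable_map_measure (hf₀m.div hf₁m).aestronglyMeasurable
      (hxm 0).aemeasurable).1 h1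
    exact h2.congr (ae_of_all _ fun ω => (hpt₁ (x 0 ω)).symm)
  have hexp1₁ : ∫ ω, Real.exp ((-1) * Real.log (f₁ (x 0 ω) / f₀ (x 0 ω))) ∂P₁ = 1 := by
    have h1 : ∫ ω, Real.exp ((-1) * Real.log (f₁ (x 0 ω) / f₀ (x 0 ω))) ∂P₁
        = ∫ ω, f₀ (x 0 ω) / f₁ (x 0 ω) ∂P₁ :=
      integral_congr_ae (ae_of_all _ fun ω => hpt₁ (x 0 ω))
    rw [h1, ← integral_map (hxm 0).aemeasurable
      (show AEStronglyMeasurable (fun y => f₀ y / f₁ y) _ from (hf₀m.div hf₁m).aestronglyMeasurable), hx₁ 0]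
    exact hr1val
  have hexpint₀ :
      Integrable (fun ω => Real.exp ((1:ℝ) * Real.log (f₁ (x 0 ω) / f₀ (x 0 ω)))) P₀ := by
    have h1 : Integrable (fun y => f₁ y / f₀ y) (P₀.map (x 0)) := by
      rw [hx₀ 0]; exact hr0int
    have h2 := (integrable_map_measure (hf₁m.div hf₀m).aestronglyMeasurable
      (hxm 0).aemeasurable).1 h1
    exact h2.congr (ae_of_all _ fun ω => (hpt₀ (x 0 ω)).symm)
  have hexp1₀ : ∫ ω, Real.exp ((1:ℝ) * Real.log (f₁ (x 0 ω) / f₀ (x 0 ω))) ∂P₀ = 1 := by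
    have h1 : ∫ ω, Real.exp ((1:ℝ) * Real.log (f₁ (x 0 ω) / f₀ (x 0 ω))) ∂P₀
        = ∫ ω, f₁ (x 0 ω) / f₀ (x 0 ω) ∂P₀ :=
      integral_congr_ae (ae_of_all _ fun ω => hpt₀ (x 0 ω))
    rw [h1, ← integral_map (hxm 0).aemeasurable
      (show AEStronglyMeasurable (fun y => f₁ y / f₀ y) _ from (hf₁m.div hf₀m).aestronglyMeasurable), hx₀ 0]
    exact hr0val
  have hmD₀ : -D₀ = ∫ ω, Real.log (f₁ (x 0 ω) / f₀ (x 0 ω)) ∂P₀ := by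
    rw [hD₀, neg_neg]
  obtain ⟨hTint₁, hwald₁, hexpT₁⟩ := sprt_master P₁ x hxm hmap₁ hindep₁
    (fun y => Real.log (f₁ y / f₀ y)) hYm hint₁ a b ha hb ℓ hℓ T hT hno₁
    D₁ hD₁ (ne_of_gt hD₁pos) (-1) (Or.inr rfl) hexpint₁ hexp1₁
  obtain ⟨hTint₀, hwald₀, hexpT₀⟩ := sprt_master P₀ x hxm hmap₀ hindep₀
    (fun y => Real.log (f₁ y / f₀ y)) hYm hint₀ a b ha hb ℓ hℓ T hT hno₀
    (-D₀) hmD₀ (neg_ne_zero.2 (ne_of_gt hD₀pos)) 1 (Or.inl rfl) hexpint₀ hexp1₀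
  -- common exponential facts
  have hEa1 : (1:ℝ) < Real.exp a := by
    rw [← Real.exp_zero]; exact Real.exp_lt_exp.2 ha
  have hEb1 : (1:ℝ) < Real.exp b := by
    rw [← Real.exp_zero]; exact Real.exp_lt_exp.2 hb
  have hEna : Real.exp (-a) < 1 := by
    rw [← Real.exp_zero]; exact Real.exp_lt_exp.2 (by linarith)
  have hEnb : Real.exp (-b) < 1 := by
    rw [← Real.exp_zero]; exact Real.exp_lt_exp.2 (by linarith)
  have hX : Real.exp b - Real.exp (-a) ≠ 0 := ne_of_gt (by linarith)
  have hA0 : Real.exp a ≠ 0 := Real.exp_ne_zero a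
  have hB0 : Real.exp b ≠ 0 := Real.exp_ne_zero b
  constructor
  · -- under P₁
    have hdec1 := helper_decomp P₁ (fun ω => ℓ (T ω) ω) hZm a b hab
      (hno₁.mono fun ω h => h.2) (fun z => z)
    have hdec2 := helper_decomp P₁ (fun ω => ℓ (T ω) ω) hZm a b hab
      (hno₁.mono fun ω h => h.2) (fun z => Real.exp ((-1) * z))
    set p := (P₁ ((fun ω => ℓ (T ω) ω) ⁻¹' {b})).toReal with hpdef
    have key : D₁ * ∫ ω, (T ω : ℝ) ∂P₁ = b * p + (-a) * (1 - p) := by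
      rw [hwald₁, hdec1]
    have hexp_eq : Real.exp ((-1:ℝ) * b) * p + Real.exp ((-1:ℝ) * (-a)) * (1 - p) = 1 :=
      hdec2.symm.trans hexpT₁
    rw [neg_one_mul, neg_one_mul, neg_neg] at hexp_eq
    have hden : Real.exp a - Real.exp (-b) ≠ 0 := ne_of_gt (by linarith)
    have hp' : p = (Real.exp a - 1) / (Real.exp a - Real.exp (-b)) := by
      rw [eq_div_iff hden]
      linear_combination -hexp_eq
    rw [eq_div_iff (mul_ne_zero (ne_of_gt hD₁pos) hX)]
    have expand : (∫ ω, (T ω : ℝ) ∂P₁) * (D₁ * (Real.exp b - Real.exp (-a)))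
        = (b * p + (-a) * (1 - p)) * (Real.exp b - Real.exp (-a)) := by
      rw [← key]; ring
    rw [expand, hp']
    have hden' : Real.exp a - (Real.exp b)⁻¹ ≠ 0 := by
      rw [← Real.exp_neg]; exact hden
    have hprod1 : (-1 : ℝ) + Real.exp a * Real.exp b ≠ 0 := ne_of_gt (by nlinarith)
    have hprod2 : Real.exp a * Real.exp b - 1 ≠ 0 := ne_of_gt (by nlinarith)
    simp only [Real.exp_neg]
    field_simp
    ring
  · -- under P₀
    have hdec1 := helper_decomp P₀ (fun ω => ℓ (T ω) ω) hZm a b hab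
      (hno₀.mono fun ω h => h.2) (fun z => z)
    have hdec2 := helper_decomp P₀ (fun ω => ℓ (T ω) ω) hZm a b hab
      (hno₀.mono fun ω h => h.2) (fun z => Real.exp ((1:ℝ) * z))
    set p := (P₀ ((fun ω => ℓ (T ω) ω) ⁻¹' {b})).toReal with hpdef
    have key : (-D₀) * ∫ ω, (T ω : ℝ) ∂P₀ = b * p + (-a) * (1 - p) := by
      rw [hwald₀, hdec1]
    have hexp_eq : Real.exp ((1:ℝ) * b) * p + Real.exp ((1:ℝ) * (-a)) * (1 - p) = 1 :=
      hdec2.symm.trans hexpT₀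
    rw [one_mul, one_mul] at hexp_eq
    have hp' : p = (1 - Real.exp (-a)) / (Real.exp b - Real.exp (-a)) := by
      rw [eq_div_iff hX]
      linear_combination hexp_eq
    rw [eq_div_iff (mul_ne_zero (neg_ne_zero.2 (ne_of_gt hD₀pos)) hX)]
    have expand : (∫ ω, (T ω : ℝ) ∂P₀) * (-D₀ * (Real.exp b - Real.exp (-a)))
        = (b * p + (-a) * (1 - p)) * (Real.exp b - Real.exp (-a)) := by
      rw [← key]; ring
    rw [expand]
    have hpX : p * (Real.exp b - Real.exp (-a)) = 1 - Real.exp (-a) := by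
      rw [hp']; exact div_mul_cancel₀ _ hX
    calc (b * p + (-a) * (1 - p)) * (Real.exp b - Real.exp (-a))
        = b * (p * (Real.exp b - Real.exp (-a)))
          - a * ((Real.exp b - Real.exp (-a)) - p * (Real.exp b - Real.exp (-a))) := by ring
      _ = b * (1 - Real.exp (-a))
          - a * ((Real.exp b - Real.exp (-a)) - (1 - Real.exp (-a))) := by rw [hpX]
      _ = -a * (Real.exp b - 1) + b * (1 - Real.exp (-a)) := by ring
end
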